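/- arXiv:2110.07015 — 2 statements merged into one kernel-verified Lean document; each statement's English description precedes it below -/
import Mathlib

section
/- Suppose that for every k ∈ ℕ, ξ_k ≤ 1, that ∑_k |α_k| < ∞, ∑_k |1 − β_k − γ_k| < ∞ and ∑_k ‖δ_k e_k‖ < ∞, and that one of the following holds: (1) γ_k → 1, and either inf_{k∈ℕ} c_k > 0 or c_k → ∞; (2) for every k, γ_k(β_k + γ_k) ≥ 0; liminf_{k→∞} γ_k(2β_k + γ_k) > 0; either inf_{k∈ℕ} c_k > 0 or c_k → ∞; liminf_{k→∞} |γ_k| > 0; and sup_{k∈ℕ} |β_k| < ∞; (3) for every k, γ_k(β_k + γ_k) ≥ 0, γ_k(2β_k + γ_k) ≥ 0, and |β_k + γ_k|·|γ_k| ≤ max{1 − |β_k|, 2 − 2|β_k + γ_k/2|}; ∑_k γ_k(2β_k + γ_k) = ∞; inf_{k∈ℕ} c_k > 0 and ∑_k |c_{k+1} − c_k| < ∞; liminf_{k→∞} |γ_k| > 0; and sup_{k∈ℕ} |β_k| < ∞. Then zer A ≠ ∅ if and only if the sequence (x_k)_{k∈ℕ} is bounded. -/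
open Filter InnerProductSpace

section helpers
variable {H : Type*} [NormedAddCommGroup H] [InnerProductSpace ℝ H]
variable (A : H → Set H)
variable (hmono : ∀ x y xu yv : H, xu ∈ A x → yv ∈ A y → 0 ≤ ⟪x - y, xu - yv⟫_ℝ)
variable (J : ℝ → H → H)
variable (hJ : ∀ c : ℝ, 0 < c → ∀ x : H, (1 / c) • (x - J c x) ∈ A (J c x))

include hmono hJ in
/-- uniqueness of resolvent -/
theorem res_unique {c : ℝ} (hc : 0 < c) {z w : H} (hw : (1 / c) • (z - w) ∈ A w) :
    J c z = w := by
  have h1 := hJ c hc z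
  have h2 := hmono (J c z) w ((1 / c) • (z - J c z)) ((1 / c) • (z - w)) h1 hw
  rw [← smul_sub, real_inner_smul_right] at h2
  have h3 : (z - J c z) - (z - w) = -(J c z - w) := by abel
  rw [h3, inner_neg_right, real_inner_self_eq_norm_sq] at h2
  have hcpos : 0 < 1 / c := by positivity
  have : ‖J c z - w‖ ^ 2 ≤ 0 := by nlinarith
  have : ‖J c z - w‖ = 0 := by nlinarith [norm_nonneg (J c z - w), sq_nonneg ‖J c z - w‖]
  rwa [norm_sub_eq_zero_iff] at this

include hmono hJ in
theorem res_firm {c : ℝ} (hc : 0 < c) (a b : H) :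
    ‖J c a - J c b‖ ^ 2 ≤ ⟪J c a - J c b, a - b⟫_ℝ := by
  have h := hmono (J c a) (J c b) _ _ (hJ c hc a) (hJ c hc b)
  rw [← smul_sub, real_inner_smul_right] at h
  have h3 : (a - J c a) - (b - J c b) = (a - b) - (J c a - J c b) := by abel
  rw [h3, inner_sub_right, real_inner_self_eq_norm_sq] at h
  have hcpos : 0 < 1 / c := by positivity
  nlinarith

include hmono hJ in
theorem res_nonexp {c : ℝ} (hc : 0 < c) (a b : H) :
    ‖J c a - J c b‖ ≤ ‖a - b‖ := by
  have h := res_firm A hmono J hJ hc a b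
  have h2 := real_inner_le_norm (J c a - J c b) (a - b)
  rcases eq_or_lt_of_le (norm_nonneg (J c a - J c b)) with h0 | h0
  · rw [← h0]; exact norm_nonneg _
  · nlinarith

include hmono hJ in
theorem res_reflect_nonexp {c : ℝ} (hc : 0 < c) (a b : H) :
    ‖((2:ℝ) • J c a - a) - ((2:ℝ) • J c b - b)‖ ≤ ‖a - b‖ := by
  have hfirm := res_firm A hmono J hJ hc a b
  have hid : ((2:ℝ) • J c a - a) - ((2:ℝ) • J c b - b)
      = (2:ℝ) • (J c a - J c b) - (a - b) := by
    rw [smul_sub]; abel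
  have hexp : ‖(2:ℝ) • (J c a - J c b) - (a - b)‖ ^ 2
      = 4 * ‖J c a - J c b‖ ^ 2 - 4 * ⟪J c a - J c b, a - b⟫_ℝ + ‖a - b‖ ^ 2 := by
    rw [norm_sub_sq_real, real_inner_smul_left, norm_smul]
    simp [mul_pow]
    ring
  have h1 : ‖((2:ℝ) • J c a - a) - ((2:ℝ) • J c b - b)‖ ^ 2 ≤ ‖a - b‖ ^ 2 := by
    rw [hid, hexp]; nlinarith
  have := norm_nonneg (((2:ℝ) • J c a - a) - ((2:ℝ) • J c b - b))
  nlinarith [norm_nonneg (a - b)]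

end helpers


section vlem
variable {H : Type*} [NormedAddCommGroup H] [InnerProductSpace ℝ H] [CompleteSpace H]

/-- ultrafilter limit existence for bounded real sequences -/
theorem ulim_exists (𝒰 : Ultrafilter ℕ) (f : ℕ → ℝ) {B : ℝ} (hf : ∀ j, |f j| ≤ B) :
    ∃ a, Tendsto f (𝒰 : Filter ℕ) (nhds a) := by
  have hmem : (𝒰 : Filter ℕ).map f ≤ Filter.principal (Set.Icc (-B) B) := by
    rw [Filter.le_principal_iff, Filter.mem_map]
    have : ∀ j, f j ∈ Set.Icc (-B) B := fun j => abs_le.1 (hf j)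
    filter_upwards [] with j using this j
  obtain ⟨a, _, ha⟩ := isCompact_Icc.ultrafilter_le_nhds (𝒰.map f) hmem
  exact ⟨a, ha⟩

theorem vlemma (A : H → Set H)
    (hmono : ∀ x y xu yv : H, xu ∈ A x → yv ∈ A y → 0 ≤ ⟪x - y, xu - yv⟫_ℝ)
    (J : ℝ → H → H)
    (hJ : ∀ c : ℝ, 0 < c → ∀ x : H, (1 / c) • (x - J c x) ∈ A (J c x))
    (y v : ℕ → H) {M : ℝ} (hy : ∀ j, ‖y j‖ ≤ M)
    (hv : Tendsto v atTop (nhds 0))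
    (hgr : ∀ j, v j ∈ A (y j)) : ∃ p : H, (0 : H) ∈ A p := by
  obtain ⟨𝒰, h𝒰⟩ := (atTop : Filter ℕ).exists_ultrafilter_le
  have hM0 : 0 ≤ M := le_trans (norm_nonneg _) (hy 0)
  -- fixed points
  have hfix : ∀ j, J 1 (y j + v j) = y j := by
    intro j
    apply res_unique A hmono J hJ one_pos
    simpa using hgr j
  -- linear functional
  have hLex : ∀ z : H, ∃ a, Tendsto (fun j => ⟪y j, z⟫_ℝ) (𝒰 : Filter ℕ) (nhds a) := by
    intro z
    exact ulim_exists 𝒰 _ (fun j => by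
      calc |⟪y j, z⟫_ℝ| ≤ ‖y j‖ * ‖z‖ := abs_real_inner_le_norm _ _
        _ ≤ M * ‖z‖ := by have := hy j; have := norm_nonneg z; nlinarith)
  classical
  set L0 : H → ℝ := fun z => Classical.choose (hLex z) with hL0def
  have hL0 : ∀ z, Tendsto (fun j => ⟪y j, z⟫_ℝ) (𝒰 : Filter ℕ) (nhds (L0 z)) :=
    fun z => Classical.choose_spec (hLex z)
  have hadd : ∀ z z', L0 (z + z') = L0 z + L0 z' := by
    intro z z'
    have h1 : Tendsto (fun j => ⟪y j, z + z'⟫_ℝ) (𝒰 : Filter ℕ) (nhds (L0 z + L0 z')) := by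
      simpa [inner_add_right] using (hL0 z).add (hL0 z')
    exact tendsto_nhds_unique (hL0 (z + z')) h1
  have hsmul : ∀ (r : ℝ) (z : H), L0 (r • z) = r * L0 z := by
    intro r z
    have h1 : Tendsto (fun j => ⟪y j, r • z⟫_ℝ) (𝒰 : Filter ℕ) (nhds (r * L0 z)) := by
      simpa [real_inner_smul_right] using (hL0 z).const_mul r
    exact tendsto_nhds_unique (hL0 (r • z)) h1
  have hbd : ∀ z, ‖L0 z‖ ≤ M * ‖z‖ := by
    intro z
    have h1 : Tendsto (fun j => |⟪y j, z⟫_ℝ|) (𝒰 : Filter ℕ) (nhds |L0 z|) :=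
      (hL0 z).abs
    rw [Real.norm_eq_abs]
    refine le_of_tendsto h1 ?_
    filter_upwards [] with j
    calc |⟪y j, z⟫_ℝ| ≤ ‖y j‖ * ‖z‖ := abs_real_inner_le_norm _ _
      _ ≤ M * ‖z‖ := by have := hy j; have := norm_nonneg z; nlinarith
  set Lmap : H →ₗ[ℝ] ℝ := { toFun := L0, map_add' := hadd, map_smul' := hsmul }
  set Lcont : H →L[ℝ] ℝ := LinearMap.mkContinuous Lmap M hbd
  set p : H := (InnerProductSpace.toDual ℝ H).symm Lcont with hpdef
  have hp : ∀ z, ⟪p, z⟫_ℝ = L0 z := fun z => InnerProductSpace.toDual_symm_apply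
  set q : H := J 1 p with hq
  -- limit of ‖y j‖²
  obtain ⟨Q, hQ⟩ := ulim_exists 𝒰 (fun j => ‖y j‖ ^ 2)
    (B := M ^ 2) (fun j => by
      rw [abs_of_nonneg (by positivity)]
      show ‖y j‖ ^ 2 ≤ M ^ 2
      have h1 := hy j; have h2 := norm_nonneg (y j); nlinarith)
  -- limits of F and G
  have hF : Tendsto (fun j => ‖y j - p‖ ^ 2) (𝒰 : Filter ℕ)
      (nhds (Q - 2 * ⟪p, p⟫_ℝ + ‖p‖ ^ 2)) := by
    have : (fun j => ‖y j - p‖ ^ 2) = fun j => ‖y j‖ ^ 2 - 2 * ⟪y j, p⟫_ℝ + ‖p‖ ^ 2 := by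
      funext j; rw [norm_sub_sq_real]
    rw [this, hp p]
    exact ((hQ.sub ((hL0 p).const_mul 2)).add tendsto_const_nhds)
  have hG : Tendsto (fun j => ‖y j - q‖ ^ 2) (𝒰 : Filter ℕ)
      (nhds (Q - 2 * ⟪p, q⟫_ℝ + ‖q‖ ^ 2)) := by
    have : (fun j => ‖y j - q‖ ^ 2) = fun j => ‖y j‖ ^ 2 - 2 * ⟪y j, q⟫_ℝ + ‖q‖ ^ 2 := by
      funext j; rw [norm_sub_sq_real]
    rw [this, hp q]
    exact ((hQ.sub ((hL0 q).const_mul 2)).add tendsto_const_nhds)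
  -- pointwise inequality
  have hvn : Tendsto (fun j => ‖v j‖) (𝒰 : Filter ℕ) (nhds 0) :=
    (tendsto_zero_iff_norm_tendsto_zero.1 hv).mono_left h𝒰
  have hRHS : Tendsto (fun j => ‖y j - p‖ ^ 2 + ‖v j‖ * (2 * (M + ‖p‖) + ‖v j‖))
      (𝒰 : Filter ℕ) (nhds (Q - 2 * ⟪p, p⟫_ℝ + ‖p‖ ^ 2)) := by
    have h2 : Tendsto (fun j => ‖v j‖ * (2 * (M + ‖p‖) + ‖v j‖)) (𝒰 : Filter ℕ) (nhds 0) := by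
      have := hvn.mul ((tendsto_const_nhds (x := 2 * (M + ‖p‖))).add hvn)
      simpa using this
    simpa using hF.add h2
  have hle : Q - 2 * ⟪p, q⟫_ℝ + ‖q‖ ^ 2 ≤ Q - 2 * ⟪p, p⟫_ℝ + ‖p‖ ^ 2 := by
    refine le_of_tendsto_of_tendsto' hG hRHS ?_
    intro j
    have h1 : ‖y j - q‖ ≤ ‖y j - p‖ + ‖v j‖ := by
      have h2 : ‖J 1 (y j + v j) - J 1 p‖ ≤ ‖(y j + v j) - p‖ :=
        res_nonexp A hmono J hJ one_pos _ _
      rw [hfix j] at h2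
      calc ‖y j - q‖ ≤ ‖(y j + v j) - p‖ := h2
        _ = ‖(y j - p) + v j‖ := by rw [show y j + v j - p = (y j - p) + v j from by abel]
        _ ≤ ‖y j - p‖ + ‖v j‖ := norm_add_le _ _
    have h3 : ‖y j - p‖ ≤ M + ‖p‖ := le_trans (norm_sub_le _ _) (by have := hy j; linarith)
    have h4 := norm_nonneg (v j)
    have h5 := norm_nonneg (y j - q)
    have h6 := norm_nonneg (y j - p)
    nlinarith
  have hqp : q = p := by
    have hpp : ⟪p, p⟫_ℝ = ‖p‖ ^ 2 := real_inner_self_eq_norm_sq p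
    have : ‖q - p‖ ^ 2 ≤ 0 := by
      rw [norm_sub_sq_real, real_inner_comm]
      linarith
    have h0 := norm_nonneg (q - p)
    have : ‖q - p‖ = 0 := by nlinarith
    rwa [norm_sub_eq_zero_iff] at this
  refine ⟨p, ?_⟩
  have := hJ 1 one_pos p
  rw [← hq, hqp] at this
  simpa using this

end vlem

section fwd
variable {H : Type*} [NormedAddCommGroup H] [InnerProductSpace ℝ H]

theorem forward_bounded (A : H → Set H)
    (hmono : ∀ x y xu yv : H, xu ∈ A x → yv ∈ A y → 0 ≤ ⟪x - y, xu - yv⟫_ℝ)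
    (J : ℝ → H → H)
    (hJ : ∀ c : ℝ, 0 < c → ∀ x : H, (1 / c) • (x - J c x) ∈ A (J c x))
    (u : H) (e : ℕ → H) (c α β γ δ : ℕ → ℝ) (hc : ∀ k, 0 < c k)
    (x : ℕ → H)
    (hrec : ∀ k, x (k + 1) = α k • u + β k • x k + γ k • J (c k) (x k) + δ k • e k)
    (hξ1 : ∀ k, |β k + γ k / 2| + |γ k / 2| ≤ 1)
    (hαsum : Summable (fun k => |α k|))
    (hβγsum : Summable (fun k => |1 - β k - γ k|))
    (hdesum : Summable (fun k => ‖δ k • e k‖))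
    (p : H) (hp : (0:H) ∈ A p) :
    Bornology.IsBounded (Set.range x) := by
  have hfixp : ∀ k, J (c k) p = p := by
    intro k
    apply res_unique A hmono J hJ (hc k)
    simpa using hp
  set τ : ℕ → ℝ := fun k => |α k| * ‖u‖ + |1 - β k - γ k| * ‖p‖ + ‖δ k • e k‖ with hτ
  have hτsum : Summable τ := ((hαsum.mul_right ‖u‖).add (hβγsum.mul_right ‖p‖)).add hdesum
  have hτnn : ∀ k, 0 ≤ τ k := fun k => by positivity
  set T := ∑' k, τ k with hT
  have hstep : ∀ k, ‖x (k+1) - p‖ ≤ ‖x k - p‖ + τ k := by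
    intro k
    have hdecomp : x (k+1) - p
        = ((β k + γ k / 2) • (x k - p) + (γ k / 2) • (((2:ℝ) • J (c k) (x k) - x k) - p))
          + (α k • u + δ k • e k + ((β k + γ k) - 1) • p) := by
      rw [hrec k]
      module
    have hreflect : ‖((2:ℝ) • J (c k) (x k) - x k) - p‖ ≤ ‖x k - p‖ := by
      have h := res_reflect_nonexp A hmono J hJ (hc k) (x k) p
      rwa [hfixp k, show (2:ℝ) • p - p = p from by rw [two_smul]; abel] at h
    have hA : ‖(β k + γ k / 2) • (x k - p) + (γ k / 2) • (((2:ℝ) • J (c k) (x k) - x k) - p)‖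
        ≤ ‖x k - p‖ := by
      calc ‖(β k + γ k / 2) • (x k - p) + (γ k / 2) • (((2:ℝ) • J (c k) (x k) - x k) - p)‖
          ≤ ‖(β k + γ k / 2) • (x k - p)‖ + ‖(γ k / 2) • (((2:ℝ) • J (c k) (x k) - x k) - p)‖ :=
            norm_add_le _ _
        _ ≤ |β k + γ k / 2| * ‖x k - p‖ + |γ k / 2| * ‖x k - p‖ := by
            rw [norm_smul, norm_smul, Real.norm_eq_abs, Real.norm_eq_abs]
            have := abs_nonneg (γ k / 2)
            have := hreflect
            have := norm_nonneg (x k - p)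
            nlinarith
        _ ≤ 1 * ‖x k - p‖ := by
            have h := hξ1 k
            have h2 := norm_nonneg (x k - p)
            nlinarith
        _ = ‖x k - p‖ := one_mul _
    have hB : ‖α k • u + δ k • e k + ((β k + γ k) - 1) • p‖ ≤ τ k := by
      have h1 : ‖α k • u‖ = |α k| * ‖u‖ := by rw [norm_smul, Real.norm_eq_abs]
      have h2 : ‖((β k + γ k) - 1) • p‖ = |1 - β k - γ k| * ‖p‖ := by
        rw [norm_smul, Real.norm_eq_abs, abs_sub_comm,
          show (1:ℝ) - (β k + γ k) = 1 - β k - γ k from by ring]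
      calc ‖α k • u + δ k • e k + ((β k + γ k) - 1) • p‖
          ≤ ‖α k • u‖ + ‖δ k • e k‖ + ‖((β k + γ k) - 1) • p‖ := norm_add₃_le
        _ = τ k := by rw [h1, h2]; simp only [hτ]; ring
    calc ‖x (k+1) - p‖
        ≤ ‖(β k + γ k / 2) • (x k - p) + (γ k / 2) • (((2:ℝ) • J (c k) (x k) - x k) - p)‖
          + ‖α k • u + δ k • e k + ((β k + γ k) - 1) • p‖ := by
            rw [hdecomp]; exact norm_add_le _ _
      _ ≤ ‖x k - p‖ + τ k := add_le_add hA hB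
  have hpartial : ∀ k, ‖x k - p‖ ≤ ‖x 0 - p‖ + ∑ i ∈ Finset.range k, τ i := by
    intro k
    induction k with
    | zero => simp
    | succ n ih =>
      rw [Finset.sum_range_succ]
      have := hstep n
      linarith
  have hbound : ∀ k, ‖x k - p‖ ≤ ‖x 0 - p‖ + T := by
    intro k
    have h2 : ∑ i ∈ Finset.range k, τ i ≤ T :=
      Summable.sum_le_tsum _ (fun i _ => hτnn i) hτsum
    have := hpartial k
    linarith
  rw [isBounded_iff_forall_norm_le]
  refine ⟨‖x 0 - p‖ + T + ‖p‖, ?_⟩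
  rintro _ ⟨k, rfl⟩
  calc ‖x k‖ = ‖(x k - p) + p‖ := by rw [sub_add_cancel]
    _ ≤ ‖x k - p‖ + ‖p‖ := norm_add_le _ _
    _ ≤ ‖x 0 - p‖ + T + ‖p‖ := by have := hbound k; linarith
end fwd


theorem sums_diverge {g : ℕ → ℝ} {r : ℝ} (hr : 0 < r) (h : ∀ᶠ k in atTop, r ≤ g k) :
    Tendsto (fun n => ∑ k ∈ Finset.range n, g k) atTop atTop := by
  obtain ⟨K, hK⟩ := eventually_atTop.1 h
  have hmin : ∀ n, K ≤ n →
      (∑ k ∈ Finset.range K, g k) + ((n:ℝ) - K) * r ≤ ∑ k ∈ Finset.range n, g k := by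
    intro n hn
    have hsplit : ∑ k ∈ Finset.range n, g k
        = (∑ k ∈ Finset.range K, g k) + ∑ k ∈ Finset.Ico K n, g k := by
      rw [Finset.sum_Ico_eq_sub _ hn]; ring
    have hcard : ((n - K : ℕ):ℝ) * r ≤ ∑ k ∈ Finset.Ico K n, g k := by
      have h2 := Finset.card_nsmul_le_sum (Finset.Ico K n) g r
        (fun k hk => hK k (Finset.mem_Ico.1 hk).1)
      rwa [Nat.card_Ico, nsmul_eq_mul] at h2
    have hcast : ((n:ℝ) - K) = ((n - K : ℕ):ℝ) := by
      rw [Nat.cast_sub hn]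
    rw [hsplit, hcast]
    linarith
  have hminor : Tendsto (fun n : ℕ => (∑ k ∈ Finset.range K, g k) + ((n:ℝ) - K) * r)
      atTop atTop := by
    apply tendsto_atTop_add_const_left
    apply Tendsto.atTop_mul_const hr
    exact tendsto_atTop_add_const_right atTop (-(K:ℝ)) tendsto_natCast_atTop_atTop
  exact tendsto_atTop_mono' atTop (eventually_atTop.2 ⟨K, hmin⟩) hminor


section bwd
variable {H : Type*} [NormedAddCommGroup H] [InnerProductSpace ℝ H] [CompleteSpace H]

set_option maxHeartbeats 4000000 in
theorem backward_zero (A : H → Set H)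
    (hmono : ∀ x y xu yv : H, xu ∈ A x → yv ∈ A y → 0 ≤ ⟪x - y, xu - yv⟫_ℝ)
    (J : ℝ → H → H)
    (hJ : ∀ c : ℝ, 0 < c → ∀ x : H, (1 / c) • (x - J c x) ∈ A (J c x))
    (u : H) (e : ℕ → H) (c α β γ δ : ℕ → ℝ) (hc : ∀ k, 0 < c k)
    (x : ℕ → H)
    (hrec : ∀ k, x (k + 1) = α k • u + β k • x k + γ k • J (c k) (x k) + δ k • e k)
    (hξ1 : ∀ k, |β k + γ k / 2| + |γ k / 2| ≤ 1)
    (hαsum : Summable (fun k => |α k|))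
    (hβγsum : Summable (fun k => |1 - β k - γ k|))
    (hdesum : Summable (fun k => ‖δ k • e k‖))
    (hγlow : ∃ r' > (0:ℝ), ∀ᶠ k in atTop, r' ≤ γ k)
    (hβbd : ∃ B, ∀ᶠ k in atTop, |β k| ≤ B)
    (hgnn : ∀ᶠ k in atTop, 0 ≤ γ k * (2 * β k + γ k))
    (hgdiv : Tendsto (fun n => ∑ k ∈ Finset.range n, γ k * (2 * β k + γ k)) atTop atTop)
    (hceps : (∃ C, ∀ k, c k ≤ C) → ∃ ε > (0:ℝ), ∀ᶠ k in atTop, ε ≤ c k)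
    (hxb : Bornology.IsBounded (Set.range x)) :
    ∃ p : H, (0 : H) ∈ A p := by
  classical
  obtain ⟨M₀, hM₀'⟩ := isBounded_iff_forall_norm_le.1 hxb
  have hM₀ : ∀ k, ‖x k‖ ≤ M₀ := fun k => hM₀' _ ⟨k, rfl⟩
  have hM₀nn : 0 ≤ M₀ := le_trans (norm_nonneg _) (hM₀ 0)
  obtain ⟨y, v, hgr, hcv, hydef⟩ :
      ∃ y v : ℕ → H, (∀ k, v k ∈ A (y k)) ∧ (∀ k, (c k) • v k = x k - y k)
        ∧ (∀ k, y k = J (c k) (x k)) := by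
    refine ⟨fun k => J (c k) (x k), fun k => (c k)⁻¹ • (x k - J (c k) (x k)), ?_, ?_, fun k => rfl⟩
    · intro k
      have := hJ (c k) (hc k) (x k)
      simpa [one_div] using this
    · intro k
      rw [smul_smul, mul_inv_cancel₀ (hc k).ne', one_smul]
  have hrecy : ∀ k, x (k + 1) = α k • u + β k • x k + γ k • y k + δ k • e k := by
    intro k
    rw [hrec k, ← hydef k]
  have hvnorm : ∀ k, c k * ‖v k‖ = ‖x k - y k‖ := by
    intro k
    rw [← hcv k, norm_smul, Real.norm_eq_abs, abs_of_pos (hc k)]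
  have hα0 : Tendsto (fun k => |α k|) atTop (nhds 0) := hαsum.tendsto_atTop_zero
  have hde0 : Tendsto (fun k => ‖δ k • e k‖) atTop (nhds 0) := hdesum.tendsto_atTop_zero
  obtain ⟨r', hr', hγev⟩ := hγlow
  obtain ⟨B, hβev⟩ := hβbd
  have hBnn : 0 ≤ B := by
    obtain ⟨k, hk⟩ := hβev.exists
    exact le_trans (abs_nonneg _) hk
  have hev : ∀ᶠ k in atTop, r' ≤ γ k ∧ |β k| ≤ B ∧ |α k| ≤ 1 ∧ ‖δ k • e k‖ ≤ 1 ∧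
      0 ≤ γ k * (2 * β k + γ k) := by
    filter_upwards [hγev, hβev,
      hα0.eventually (eventually_le_nhds (by norm_num : (0:ℝ) < 1)),
      hde0.eventually (eventually_le_nhds (by norm_num : (0:ℝ) < 1)), hgnn]
      with k h1 h2 h3 h4 h5
    exact ⟨h1, h2, h3, h4, h5⟩
  obtain ⟨K, hK⟩ := eventually_atTop.1 hev
  -- bound on y on the tail
  obtain ⟨M₁, hM₁⟩ : ∃ a : ℝ, a = (M₀ + ‖u‖ + B * M₀ + 1) / r' := ⟨_, rfl⟩
  have hyrec : ∀ k, γ k • y k = x (k+1) - α k • u - β k • x k - δ k • e k := by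
    intro k
    rw [hrecy k]; abel
  have hyb : ∀ k, K ≤ k → ‖y k‖ ≤ M₁ := by
    intro k hk
    obtain ⟨hγk, hβk, hαk, hδk, -⟩ := hK k hk
    have h1 : ‖γ k • y k‖ ≤ M₀ + ‖u‖ + B * M₀ + 1 := by
      rw [hyrec k]
      have t1 : ‖x (k+1) - α k • u - β k • x k - δ k • e k‖
          ≤ ‖x (k+1)‖ + ‖α k • u‖ + ‖β k • x k‖ + ‖δ k • e k‖ := by
        calc ‖x (k+1) - α k • u - β k • x k - δ k • e k‖
            ≤ ‖x (k+1) - α k • u - β k • x k‖ + ‖δ k • e k‖ := norm_sub_le _ _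
          _ ≤ (‖x (k+1) - α k • u‖ + ‖β k • x k‖) + ‖δ k • e k‖ := by
              gcongr; exact norm_sub_le _ _
          _ ≤ (‖x (k+1)‖ + ‖α k • u‖ + ‖β k • x k‖) + ‖δ k • e k‖ := by
              gcongr; exact norm_sub_le _ _
          _ = _ := by ring
      have t2 : ‖α k • u‖ ≤ ‖u‖ := by
        rw [norm_smul, Real.norm_eq_abs]
        have := norm_nonneg u; nlinarith
      have t3 : ‖β k • x k‖ ≤ B * M₀ := by
        rw [norm_smul, Real.norm_eq_abs]
        have := hM₀ k; have := abs_nonneg (β k); nlinarith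
      have := hM₀ (k+1)
      linarith
    have h2 : r' * ‖y k‖ ≤ ‖γ k • y k‖ := by
      rw [norm_smul, Real.norm_eq_abs]
      have h3 : r' ≤ |γ k| := le_trans hγk (le_abs_self _)
      have := norm_nonneg (y k); nlinarith
    rw [hM₁, le_div_iff₀ hr']
    linarith
  obtain ⟨M, hM⟩ : ∃ a : ℝ, a = max M₀ M₁ := ⟨_, rfl⟩
  have hxM : ∀ k, ‖x k‖ ≤ M := fun k => hM ▸ le_trans (hM₀ k) (le_max_left _ _)
  have hyM : ∀ k, K ≤ k → ‖y k‖ ≤ M := fun k hk => hM ▸ le_trans (hyb k hk) (le_max_right _ _)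
  have hMnn : 0 ≤ M := hM ▸ le_trans hM₀nn (le_max_left _ _)
  by_cases hCb : ∃ C, ∀ k, c k ≤ C
  · obtain ⟨C, hCle⟩ := hCb
    obtain ⟨ε, hε, hεev⟩ := hceps ⟨C, hCle⟩
    obtain ⟨K₂, hK₂⟩ := eventually_atTop.1 hεev
    set Kb : ℕ := max K K₂ with hKbdef
    have hKbK : K ≤ Kb := le_max_left _ _
    have hεc : ∀ k, Kb ≤ k → ε ≤ c k := fun k hk => hK₂ k (le_trans (le_max_right _ _) hk)
    have hC0 : 0 < C := lt_of_lt_of_le (hc 0) (hCle 0)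
    set σ : ℕ → ℝ := fun k => |α k| * ‖u‖ + ‖δ k • e k‖ + |1 - β k - γ k| * M₀ with hσdef
    have hσsum : Summable σ := ((hαsum.mul_right ‖u‖).add hdesum).add (hβγsum.mul_right M₀)
    have hσnn : ∀ k, 0 ≤ σ k := fun k => by positivity
    obtain ⟨Sg, hSgdef⟩ : ∃ a : ℝ, a = ∑' k, σ k := ⟨_, rfl⟩
    have hSgnn : 0 ≤ Sg := hSgdef ▸ tsum_nonneg hσnn
    have hσle : ∀ k, σ k ≤ Sg := fun k => hSgdef ▸ Summable.le_tsum hσsum k (fun j _ => hσnn j)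
    obtain ⟨Bg, hBgdef⟩ : ∃ a : ℝ, a = ∑' k, |1 - β k - γ k| := ⟨_, rfl⟩
    have hBgnn : 0 ≤ Bg := hBgdef ▸ tsum_nonneg (fun k => abs_nonneg (1 - β k - γ k))
    set s : ℕ → H := fun k => α k • u + δ k • e k + ((β k + γ k) - 1) • x k with hsdef
    have hsle : ∀ k, ‖s k‖ ≤ σ k := by
      intro k
      have e1 : ‖α k • u‖ = |α k| * ‖u‖ := by rw [norm_smul, Real.norm_eq_abs]
      have e2 : ‖((β k + γ k) - 1) • x k‖ ≤ |1 - β k - γ k| * M₀ := by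
        rw [norm_smul, Real.norm_eq_abs]
        have h3 : |β k + γ k - 1| = |1 - β k - γ k| := by
          rw [abs_sub_comm]; congr 1; ring
        rw [h3]
        exact mul_le_mul_of_nonneg_left (hM₀ k) (abs_nonneg _)
      calc ‖s k‖ ≤ ‖α k • u‖ + ‖δ k • e k‖ + ‖((β k + γ k) - 1) • x k‖ := norm_add₃_le
        _ ≤ σ k := by rw [e1, hσdef]; simp only []; linarith
    have hF1 : ∀ k, (γ k * c k) • v k = (x k - x (k + 1)) + s k := by
      intro k
      have h1 : (γ k * c k) • v k = γ k • (x k - y k) := by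
        rw [← hcv k, smul_smul]
      rw [h1, hrecy k, hsdef]
      module
    have hTel : ∀ n, ∑ k ∈ Finset.range n, (γ k * c k) • v k
        = (x 0 - x n) + ∑ k ∈ Finset.range n, s k := by
      intro n
      induction n with
      | zero => simp
      | succ m ih =>
        rw [Finset.sum_range_succ, ih, Finset.sum_range_succ, hF1 m]
        abel
    have hvV : ∀ k, Kb ≤ k → ‖v k‖ ≤ 2 * M / ε := by
      intro k hk
      have h2 : ‖x k - y k‖ ≤ 2 * M := by
        have := hxM k; have := hyM k (le_trans hKbK hk)
        calc ‖x k - y k‖ ≤ ‖x k‖ + ‖y k‖ := norm_sub_le _ _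
          _ ≤ 2 * M := by linarith
      have h1 := hvnorm k
      have h3 := hεc k hk
      have h4 := norm_nonneg (v k)
      rw [le_div_iff₀ hε]
      nlinarith
    obtain ⟨D, hDdef⟩ : ∃ a : ℝ, a = M₀ ^ 2 + (4 * C ^ 2 * (2 * M / ε) ^ 2) * Bg
      + (2 * M₀ + 3 * Sg) * Sg + 2 * (M * (2 * M₀ + Sg)) := ⟨_, rfl⟩
    have hKey : ∀ N, Kb ≤ N →
        ∑ k ∈ Finset.Ico Kb N, (c k ^ 2 * (γ k * (2 * β k + γ k))) * ‖v k‖ ^ 2 ≤ D := by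
      intro N hN
      have hFK : ∀ k ∈ Finset.Ico Kb N, K ≤ k ∧ Kb ≤ k := by
        intro k hk
        have h1 := (Finset.mem_Ico.1 hk).1
        exact ⟨le_trans hKbK h1, h1⟩
      have hwnn : ∀ k ∈ Finset.Ico Kb N, 0 ≤ γ k * c k := by
        intro k hk
        have h1 := (hK k (hFK k hk).1).1
        exact mul_nonneg (le_trans hr'.le h1) (hc k).le
      set Sv : H := ∑ k ∈ Finset.Ico Kb N, (γ k * c k) • v k with hSvdef
      have hSeq : Sv = (x Kb - x N) + ∑ k ∈ Finset.Ico Kb N, s k := by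
        rw [hSvdef, Finset.sum_Ico_eq_sub _ hN, Finset.sum_Ico_eq_sub s hN, hTel, hTel]
        abel
      have hsumσ : ∑ k ∈ Finset.Ico Kb N, σ k ≤ Sg :=
        hSgdef ▸ Summable.sum_le_tsum _ (fun i _ => hσnn i) hσsum
      have hsumb : ∑ k ∈ Finset.Ico Kb N, |1 - β k - γ k| ≤ Bg :=
        hBgdef ▸ Summable.sum_le_tsum _ (fun i _ => abs_nonneg _) hβγsum
      have hSb : ‖Sv‖ ≤ 2 * M₀ + Sg := by
        rw [hSeq]
        calc ‖(x Kb - x N) + ∑ k ∈ Finset.Ico Kb N, s k‖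
            ≤ ‖x Kb - x N‖ + ‖∑ k ∈ Finset.Ico Kb N, s k‖ := norm_add_le _ _
          _ ≤ (‖x Kb‖ + ‖x N‖) + ∑ k ∈ Finset.Ico Kb N, ‖s k‖ := by
              gcongr
              · exact norm_sub_le _ _
              · exact norm_sum_le _ _
          _ ≤ (M₀ + M₀) + ∑ k ∈ Finset.Ico Kb N, σ k := by
              gcongr
              · exact hM₀ _
              · exact hM₀ _
              · exact hsle _
          _ ≤ 2 * M₀ + Sg := by linarith
      set P : ℝ := ∑ k ∈ Finset.Ico Kb N, (γ k * c k) * ⟪y k, v k⟫_ℝ with hPdef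
      set W : ℝ := ∑ k ∈ Finset.Ico Kb N, γ k * c k with hWdef
      set Y : H := ∑ k ∈ Finset.Ico Kb N, (γ k * c k) • y k with hYdef
      have hWnn : 0 ≤ W := Finset.sum_nonneg hwnn
      have hdou : (0:ℝ) ≤ ∑ k ∈ Finset.Ico Kb N, ∑ l ∈ Finset.Ico Kb N,
          ((γ k * c k) * (γ l * c l)) * ⟪y k - y l, v k - v l⟫_ℝ :=
        Finset.sum_nonneg (fun k hk => Finset.sum_nonneg (fun l hl =>
          mul_nonneg (mul_nonneg (hwnn k hk) (hwnn l hl)) (hmono _ _ _ _ (hgr k) (hgr l))))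
      have hident : ∑ k ∈ Finset.Ico Kb N, ∑ l ∈ Finset.Ico Kb N,
          ((γ k * c k) * (γ l * c l)) * ⟪y k - y l, v k - v l⟫_ℝ
          = 2 * (W * P) - 2 * ⟪Y, Sv⟫_ℝ := by
        have hterm : ∀ k ∈ Finset.Ico Kb N, ∀ l ∈ Finset.Ico Kb N,
            ((γ k * c k) * (γ l * c l)) * ⟪y k - y l, v k - v l⟫_ℝ
            = ((γ k * c k) * ⟪y k, v k⟫_ℝ) * (γ l * c l)
              - ⟪(γ k * c k) • y k, (γ l * c l) • v l⟫_ℝ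
              - ⟪(γ l * c l) • y l, (γ k * c k) • v k⟫_ℝ
              + ((γ l * c l) * ⟪y l, v l⟫_ℝ) * (γ k * c k) := by
          intro k _ l _
          simp only [inner_sub_left, inner_sub_right, real_inner_smul_left,
            real_inner_smul_right]
          ring
        rw [Finset.sum_congr rfl (fun k hk => Finset.sum_congr rfl (fun l hl => hterm k hk l hl))]
        have hsplit : ∀ k ∈ Finset.Ico Kb N,
            ∑ l ∈ Finset.Ico Kb N,
              (((γ k * c k) * ⟪y k, v k⟫_ℝ) * (γ l * c l)
                - ⟪(γ k * c k) • y k, (γ l * c l) • v l⟫_ℝ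
                - ⟪(γ l * c l) • y l, (γ k * c k) • v k⟫_ℝ
                + ((γ l * c l) * ⟪y l, v l⟫_ℝ) * (γ k * c k))
            = ((γ k * c k) * ⟪y k, v k⟫_ℝ) * W - ⟪(γ k * c k) • y k, Sv⟫_ℝ
              - ⟪Y, (γ k * c k) • v k⟫_ℝ + P * (γ k * c k) := by
          intro k _
          rw [Finset.sum_add_distrib, Finset.sum_sub_distrib, Finset.sum_sub_distrib,
            ← Finset.mul_sum, ← inner_sum, ← sum_inner, ← Finset.sum_mul,
            ← hWdef, ← hSvdef, ← hYdef, ← hPdef]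
        rw [Finset.sum_congr rfl hsplit]
        rw [Finset.sum_add_distrib, Finset.sum_sub_distrib, Finset.sum_sub_distrib,
          ← Finset.sum_mul, ← sum_inner, ← inner_sum, ← Finset.mul_sum,
          ← hWdef, ← hSvdef, ← hYdef, ← hPdef]
        ring
      have hYb : ‖Y‖ ≤ W * M := by
        calc ‖Y‖ ≤ ∑ k ∈ Finset.Ico Kb N, ‖(γ k * c k) • y k‖ := norm_sum_le _ _
          _ ≤ ∑ k ∈ Finset.Ico Kb N, (γ k * c k) * M := by
              apply Finset.sum_le_sum
              intro k hk
              rw [norm_smul, Real.norm_eq_abs, abs_of_nonneg (hwnn k hk)]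
              exact mul_le_mul_of_nonneg_left (hyM k (hFK k hk).1) (hwnn k hk)
          _ = W * M := by rw [← Finset.sum_mul]
      have hPlow : -(M * (2 * M₀ + Sg)) ≤ P := by
        have h1 : -⟪Y, Sv⟫_ℝ ≤ ‖Y‖ * ‖Sv‖ := by
          have h2 := abs_real_inner_le_norm Y Sv
          have h3 := neg_abs_le ⟪Y, Sv⟫_ℝ
          linarith
        have h2 : ‖Y‖ * ‖Sv‖ ≤ (W * M) * (2 * M₀ + Sg) :=
          mul_le_mul hYb hSb (norm_nonneg _) (mul_nonneg hWnn hMnn)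
        have h3 : (0:ℝ) ≤ W * P - ⟪Y, Sv⟫_ℝ := by
          have := hdou; rw [hident] at this; linarith
        rcases eq_or_lt_of_le hWnn with hW0 | hW0
        · have hall : ∀ k ∈ Finset.Ico Kb N, γ k * c k = 0 :=
            fun k hk => (Finset.sum_eq_zero_iff_of_nonneg hwnn).1 hW0.symm k hk
          have hP0 : P = 0 :=
            Finset.sum_eq_zero (fun k hk => by rw [hall k hk]; ring)
          rw [hP0]
          have : 0 ≤ M * (2 * M₀ + Sg) := mul_nonneg hMnn (by linarith)
          linarith
        · have hge : (0:ℝ) ≤ W * (P + M * (2 * M₀ + Sg)) := by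
            have e2 : -((W * M) * (2 * M₀ + Sg)) ≤ ⟪Y, Sv⟫_ℝ := by nlinarith [h1, h2]
            nlinarith [h3, e2]
          nlinarith [hge, hW0]
      have hperk : ∀ k ∈ Finset.Ico Kb N, 2 * ((γ k * c k) * ⟪y k, v k⟫_ℝ)
          ≤ (‖x k‖ ^ 2 - ‖x (k + 1)‖ ^ 2)
            - (c k ^ 2 * (γ k * (2 * β k + γ k))) * ‖v k‖ ^ 2
            + (4 * C ^ 2 * (2 * M / ε) ^ 2) * |1 - β k - γ k|
            + (2 * M₀ + 3 * Sg) * σ k := by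
        intro k hk
        obtain ⟨hkK, hkKb⟩ := hFK k hk
        have hγk := (hK k hkK).1
        have hgk := (hK k hkK).2.2.2.2
        have hεk := hεc k hkKb
        have hvVk := hvV k hkKb
        have hsk := hsle k
        have hσk := hσle k
        have haeq : x k - (γ k * c k) • v k = x (k + 1) - s k := by
          rw [hF1 k]; abel
        have hxrw : ‖x (k + 1)‖ ≤ ‖x k - (γ k * c k) • v k‖ + ‖s k‖ := by
          have h4 : x (k + 1) = (x k - (γ k * c k) • v k) + s k := by rw [haeq]; abel
          rw [h4]; exact norm_add_le _ _
        have hna : ‖x k - (γ k * c k) • v k‖ ≤ M₀ + Sg := by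
          rw [haeq]
          calc ‖x (k + 1) - s k‖ ≤ ‖x (k + 1)‖ + ‖s k‖ := norm_sub_le _ _
            _ ≤ M₀ + Sg := by have := hM₀ (k + 1); linarith
        have hsq1 : ‖x (k + 1)‖ ^ 2 ≤ ‖x k - (γ k * c k) • v k‖ ^ 2 + (2 * M₀ + 3 * Sg) * σ k := by
          have hs0 := norm_nonneg (s k)
          have ha0 := norm_nonneg (x k - (γ k * c k) • v k)
          have hx0 := norm_nonneg (x (k + 1))
          have hMSnn : (0:ℝ) ≤ M₀ + Sg := by linarith
          have p1 : ‖x (k + 1)‖ ^ 2 ≤ (‖x k - (γ k * c k) • v k‖ + ‖s k‖) ^ 2 :=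
            pow_le_pow_left₀ hx0 hxrw 2
          have p2 : ‖x k - (γ k * c k) • v k‖ * ‖s k‖ ≤ (M₀ + Sg) * σ k :=
            mul_le_mul hna hsk hs0 hMSnn
          have p3 : ‖s k‖ * ‖s k‖ ≤ σ k * Sg :=
            mul_le_mul hsk (le_trans hsk hσk) hs0 (hσnn k)
          linarith [p1, p2, p3]
        have hexp : ‖x k - (γ k * c k) • v k‖ ^ 2
            = ‖x k‖ ^ 2 - 2 * ((γ k * c k) * ⟪x k, v k⟫_ℝ) + (γ k * c k) ^ 2 * ‖v k‖ ^ 2 := by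
          rw [norm_sub_sq_real, real_inner_smul_right, norm_smul, Real.norm_eq_abs, mul_pow, sq_abs]
        have hxv : ⟪x k, v k⟫_ℝ = ⟪y k, v k⟫_ℝ + c k * ‖v k‖ ^ 2 := by
          have h5 : y k + c k • v k = x k := by rw [hcv k]; abel
          rw [← h5, inner_add_left, real_inner_smul_left, real_inner_self_eq_norm_sq]
        have hg2 : |γ k| ≤ 2 := by
          have h6 := hξ1 k
          have h7 : |γ k / 2| = |γ k| / 2 := by rw [abs_div]; norm_num
          have h8 := abs_nonneg (β k + γ k / 2)
          linarith
        have hstepE : -(2 * c k ^ 2 * (γ k * (1 - β k - γ k))) * ‖v k‖ ^ 2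
            ≤ (4 * C ^ 2 * (2 * M / ε) ^ 2) * |1 - β k - γ k| := by
          have hq := abs_nonneg (1 - β k - γ k)
          have hc2 : c k ^ 2 ≤ C ^ 2 := pow_le_pow_left₀ (hc k).le (hCle k) 2
          have hγq : |γ k * (1 - β k - γ k)| ≤ 2 * |1 - β k - γ k| := by
            rw [abs_mul]
            exact mul_le_mul_of_nonneg_right hg2 hq
          have hv2 : ‖v k‖ ^ 2 ≤ (2 * M / ε) ^ 2 :=
            pow_le_pow_left₀ (norm_nonneg (v k)) hvVk 2
          have h9 : -(2 * c k ^ 2 * (γ k * (1 - β k - γ k))) * ‖v k‖ ^ 2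
              ≤ 2 * c k ^ 2 * |γ k * (1 - β k - γ k)| * ‖v k‖ ^ 2 := by
            have hnn : (0:ℝ) ≤ 2 * c k ^ 2 * ‖v k‖ ^ 2 := by positivity
            have habs2 : -(γ k * (1 - β k - γ k)) ≤ |γ k * (1 - β k - γ k)| := neg_le_abs _
            linarith [mul_le_mul_of_nonneg_left habs2 hnn]
          have habs := abs_nonneg (γ k * (1 - β k - γ k))
          have h10 : 2 * c k ^ 2 * |γ k * (1 - β k - γ k)| * ‖v k‖ ^ 2
              ≤ 2 * C ^ 2 * (2 * |1 - β k - γ k|) * (2 * M / ε) ^ 2 := by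
            have t1 : 2 * (c k ^ 2 * |γ k * (1 - β k - γ k)|)
                ≤ 2 * (C ^ 2 * (2 * |1 - β k - γ k|)) := by
              have t2 : c k ^ 2 * |γ k * (1 - β k - γ k)| ≤ C ^ 2 * (2 * |1 - β k - γ k|) :=
                mul_le_mul hc2 hγq habs (sq_nonneg C)
              linarith
            have t3 : (0:ℝ) ≤ 2 * (c k ^ 2 * |γ k * (1 - β k - γ k)|) := by positivity
            have t4 : (0:ℝ) ≤ (2 * M / ε) ^ 2 := sq_nonneg _
            have := mul_le_mul t1 hv2 (sq_nonneg ‖v k‖) (le_trans t3 t1)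
            linarith
          calc -(2 * c k ^ 2 * (γ k * (1 - β k - γ k))) * ‖v k‖ ^ 2
              ≤ 2 * c k ^ 2 * |γ k * (1 - β k - γ k)| * ‖v k‖ ^ 2 := h9
            _ ≤ 2 * C ^ 2 * (2 * |1 - β k - γ k|) * (2 * M / ε) ^ 2 := h10
            _ = (4 * C ^ 2 * (2 * M / ε) ^ 2) * |1 - β k - γ k| := by ring
        have hring : ((γ k * c k) ^ 2 - 2 * (γ k * c k) * c k) * ‖v k‖ ^ 2
            = -((c k ^ 2 * (γ k * (2 * β k + γ k))) * ‖v k‖ ^ 2)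
              + (-(2 * c k ^ 2 * (γ k * (1 - β k - γ k))) * ‖v k‖ ^ 2) := by ring
        have hxv2 : 2 * ((γ k * c k) * ⟪x k, v k⟫_ℝ)
            = 2 * ((γ k * c k) * ⟪y k, v k⟫_ℝ) + 2 * (γ k * c k) * c k * ‖v k‖ ^ 2 := by
          rw [hxv]; ring
        have e3 : 2 * ((γ k * c k) * ⟪y k, v k⟫_ℝ)
            ≤ (‖x k‖ ^ 2 - ‖x (k + 1)‖ ^ 2)
              + ((γ k * c k) ^ 2 - 2 * (γ k * c k) * c k) * ‖v k‖ ^ 2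
              + (2 * M₀ + 3 * Sg) * σ k := by linarith [hsq1, hexp, hxv2]
        rw [hring] at e3
        refine le_trans e3 ?_
        linarith only [hstepE]
      have hsumper := Finset.sum_le_sum hperk
      have htel2 : ∑ k ∈ Finset.Ico Kb N, (‖x k‖ ^ 2 - ‖x (k + 1)‖ ^ 2)
          = ‖x Kb‖ ^ 2 - ‖x N‖ ^ 2 := by
        rw [Finset.sum_Ico_eq_sub _ hN, Finset.sum_range_sub' (fun k => ‖x k‖ ^ 2),
          Finset.sum_range_sub' (fun k => ‖x k‖ ^ 2)]
        ring
      have hlhs : ∑ k ∈ Finset.Ico Kb N, 2 * ((γ k * c k) * ⟪y k, v k⟫_ℝ) = 2 * P := by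
        rw [hPdef, Finset.mul_sum]
      have hrhs : ∑ k ∈ Finset.Ico Kb N,
          ((‖x k‖ ^ 2 - ‖x (k + 1)‖ ^ 2)
            - (c k ^ 2 * (γ k * (2 * β k + γ k))) * ‖v k‖ ^ 2
            + (4 * C ^ 2 * (2 * M / ε) ^ 2) * |1 - β k - γ k|
            + (2 * M₀ + 3 * Sg) * σ k)
          = (‖x Kb‖ ^ 2 - ‖x N‖ ^ 2)
            - (∑ k ∈ Finset.Ico Kb N, (c k ^ 2 * (γ k * (2 * β k + γ k))) * ‖v k‖ ^ 2)
            + (4 * C ^ 2 * (2 * M / ε) ^ 2) * (∑ k ∈ Finset.Ico Kb N, |1 - β k - γ k|)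
            + (2 * M₀ + 3 * Sg) * (∑ k ∈ Finset.Ico Kb N, σ k) := by
        rw [Finset.sum_add_distrib, Finset.sum_add_distrib, Finset.sum_sub_distrib,
          htel2, ← Finset.mul_sum, ← Finset.mul_sum]
      rw [hlhs, hrhs] at hsumper
      have hx2 : ‖x Kb‖ ^ 2 ≤ M₀ ^ 2 := by nlinarith [hM₀ Kb, norm_nonneg (x Kb)]
      have hx3 : (0:ℝ) ≤ ‖x N‖ ^ 2 := sq_nonneg _
      have hcoef1 : (0:ℝ) ≤ 4 * C ^ 2 * (2 * M / ε) ^ 2 := by positivity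
      have hcoef2 : (0:ℝ) ≤ 2 * M₀ + 3 * Sg := by linarith
      have hb1 : (4 * C ^ 2 * (2 * M / ε) ^ 2) * (∑ k ∈ Finset.Ico Kb N, |1 - β k - γ k|)
          ≤ (4 * C ^ 2 * (2 * M / ε) ^ 2) * Bg := mul_le_mul_of_nonneg_left hsumb hcoef1
      have hb2 : (2 * M₀ + 3 * Sg) * (∑ k ∈ Finset.Ico Kb N, σ k)
          ≤ (2 * M₀ + 3 * Sg) * Sg := mul_le_mul_of_nonneg_left hsumσ hcoef2
      have hfin : (0:ℝ) ≤ 3 * Sg * Sg := by positivity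
      rw [hDdef]
      linarith [hPlow, hsumper, hx2, hx3, hb1, hb2]
    have hKey2 : ∀ N, Kb ≤ N →
        ∑ k ∈ Finset.Ico Kb N, (γ k * (2 * β k + γ k)) * ‖v k‖ ^ 2 ≤ D / ε ^ 2 := by
      intro N hN
      have h1 : ε ^ 2 * ∑ k ∈ Finset.Ico Kb N, (γ k * (2 * β k + γ k)) * ‖v k‖ ^ 2
          ≤ ∑ k ∈ Finset.Ico Kb N, (c k ^ 2 * (γ k * (2 * β k + γ k))) * ‖v k‖ ^ 2 := by
        rw [Finset.mul_sum]
        apply Finset.sum_le_sum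
        intro k hk
        have hkK : K ≤ k := le_trans hKbK (Finset.mem_Ico.1 hk).1
        have hgk := (hK k hkK).2.2.2.2
        have hεk := hεc k (Finset.mem_Ico.1 hk).1
        have he2 : ε ^ 2 ≤ c k ^ 2 := pow_le_pow_left₀ hε.le hεk 2
        have hnn : 0 ≤ (γ k * (2 * β k + γ k)) * ‖v k‖ ^ 2 := mul_nonneg hgk (sq_nonneg _)
        calc ε ^ 2 * ((γ k * (2 * β k + γ k)) * ‖v k‖ ^ 2)
            ≤ c k ^ 2 * ((γ k * (2 * β k + γ k)) * ‖v k‖ ^ 2) :=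
              mul_le_mul_of_nonneg_right he2 hnn
          _ = (c k ^ 2 * (γ k * (2 * β k + γ k))) * ‖v k‖ ^ 2 := by ring
      have h2 := hKey N hN
      rw [le_div_iff₀ (by positivity : (0:ℝ) < ε ^ 2)]
      nlinarith [h1, h2]
    have hsmall : ∀ μ : ℝ, 0 < μ → ∀ K₃ : ℕ, ∃ k, K₃ ≤ k ∧ ‖v k‖ < μ := by
      intro μ hμ K₃
      by_contra hcon
      push_neg at hcon
      have hK₄ : ∀ N, max Kb K₃ ≤ N →
          μ ^ 2 * ∑ k ∈ Finset.Ico (max Kb K₃) N, (γ k * (2 * β k + γ k)) ≤ D / ε ^ 2 := by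
        intro N hN
        have hsub : Finset.Ico (max Kb K₃) N ⊆ Finset.Ico Kb N :=
          Finset.Ico_subset_Ico (le_max_left _ _) le_rfl
        have h1 : ∀ k ∈ Finset.Ico (max Kb K₃) N,
            μ ^ 2 * (γ k * (2 * β k + γ k)) ≤ (γ k * (2 * β k + γ k)) * ‖v k‖ ^ 2 := by
          intro k hk
          obtain ⟨hk1, hk2⟩ := Finset.mem_Ico.1 hk
          have hgk := (hK k (le_trans hKbK (le_trans (le_max_left _ _) hk1))).2.2.2.2
          have hvk : μ ≤ ‖v k‖ := hcon k (le_trans (le_max_right _ _) hk1)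
          have hμ2 : μ ^ 2 ≤ ‖v k‖ ^ 2 := pow_le_pow_left₀ hμ.le hvk 2
          calc μ ^ 2 * (γ k * (2 * β k + γ k)) = (γ k * (2 * β k + γ k)) * μ ^ 2 := by ring
            _ ≤ (γ k * (2 * β k + γ k)) * ‖v k‖ ^ 2 := mul_le_mul_of_nonneg_left hμ2 hgk
        have h2 : ∀ k ∈ Finset.Ico Kb N, 0 ≤ (γ k * (2 * β k + γ k)) * ‖v k‖ ^ 2 := by
          intro k hk
          have hgk := (hK k (le_trans hKbK (Finset.mem_Ico.1 hk).1)).2.2.2.2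
          exact mul_nonneg hgk (sq_nonneg _)
        have h3 : ∑ k ∈ Finset.Ico (max Kb K₃) N, (γ k * (2 * β k + γ k)) * ‖v k‖ ^ 2
            ≤ ∑ k ∈ Finset.Ico Kb N, (γ k * (2 * β k + γ k)) * ‖v k‖ ^ 2 :=
          Finset.sum_le_sum_of_subset_of_nonneg hsub (fun k hk _ => h2 k hk)
        have h4 := hKey2 N (le_trans (le_max_left _ _) hN)
        calc μ ^ 2 * ∑ k ∈ Finset.Ico (max Kb K₃) N, (γ k * (2 * β k + γ k))
            = ∑ k ∈ Finset.Ico (max Kb K₃) N, μ ^ 2 * (γ k * (2 * β k + γ k)) := by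
              rw [Finset.mul_sum]
          _ ≤ ∑ k ∈ Finset.Ico (max Kb K₃) N, (γ k * (2 * β k + γ k)) * ‖v k‖ ^ 2 :=
              Finset.sum_le_sum h1
          _ ≤ ∑ k ∈ Finset.Ico Kb N, (γ k * (2 * β k + γ k)) * ‖v k‖ ^ 2 := h3
          _ ≤ D / ε ^ 2 := h4
      obtain ⟨N, hN1, hN2⟩ :
          ∃ N, (D / ε ^ 2 / μ ^ 2 + ∑ k ∈ Finset.range (max Kb K₃), (γ k * (2 * β k + γ k))
            < ∑ k ∈ Finset.range N, (γ k * (2 * β k + γ k))) ∧ max Kb K₃ ≤ N :=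
        ((hgdiv.eventually_gt_atTop _).and (eventually_ge_atTop (max Kb K₃))).exists
      have h6 : ∑ k ∈ Finset.Ico (max Kb K₃) N, (γ k * (2 * β k + γ k))
          = ∑ k ∈ Finset.range N, (γ k * (2 * β k + γ k))
            - ∑ k ∈ Finset.range (max Kb K₃), (γ k * (2 * β k + γ k)) :=
        Finset.sum_Ico_eq_sub _ hN2
      have h7 := hK₄ N hN2
      rw [h6] at h7
      have h8 : (0:ℝ) < μ ^ 2 := by positivity
      have h9 : D / ε ^ 2 / μ ^ 2
          < ∑ k ∈ Finset.range N, (γ k * (2 * β k + γ k))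
            - ∑ k ∈ Finset.range (max Kb K₃), (γ k * (2 * β k + γ k)) := by linarith
      have h11 : D / ε ^ 2 < (∑ k ∈ Finset.range N, (γ k * (2 * β k + γ k))
            - ∑ k ∈ Finset.range (max Kb K₃), (γ k * (2 * β k + γ k))) * μ ^ 2 :=
        (div_lt_iff₀ h8).1 h9
      nlinarith [h7, h11]
    have hsel : ∀ j : ℕ, ∃ k, max K j ≤ k ∧ ‖v k‖ < 1 / ((j:ℝ) + 1) :=
      fun j => hsmall _ (by positivity) _
    choose kk hkk1 hkk2 using hsel
    apply vlemma A hmono J hJ (fun j => y (kk j)) (fun j => v (kk j)) (M := M)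
      (fun j => hyM _ (le_trans (le_max_left _ _) (hkk1 j))) ?_ (fun j => hgr _)
    apply squeeze_zero_norm (a := fun j : ℕ => 1 / ((j:ℝ) + 1))
    · exact fun j => (hkk2 j).le
    · exact tendsto_one_div_add_atTop_nhds_zero_nat
  · -- unbounded c branch
    push_neg at hCb
    have hsub : ∀ j : ℕ, ∃ k, K ≤ k ∧ (j:ℝ) + 1 ≤ c k := by
      intro j
      set C₀ : ℝ := max ((j:ℝ) + 1) (∑ i ∈ Finset.range K, |c i|) with hC₀
      obtain ⟨k, hk⟩ := hCb C₀
      refine ⟨k, ?_, ?_⟩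
      · by_contra hlt
        push_neg at hlt
        have h1 : c k ≤ ∑ i ∈ Finset.range K, |c i| :=
          le_trans (le_abs_self _)
            (Finset.single_le_sum (fun i _ => abs_nonneg (c i)) (Finset.mem_range.2 hlt))
        have h2 : c k ≤ C₀ := le_trans h1 (le_max_right _ _)
        linarith
      · have := le_max_left ((j:ℝ) + 1) (∑ i ∈ Finset.range K, |c i|)
        linarith
    choose kk hkk1 hkk2 using hsub
    apply vlemma A hmono J hJ (fun j => y (kk j)) (fun j => v (kk j)) (M := M)
      (fun j => hyM _ (hkk1 j)) ?_ (fun j => hgr _)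
    apply squeeze_zero_norm (a := fun j : ℕ => (2 * M) * (1 / ((j:ℝ) + 1)))
    · intro j
      have hcj : (0:ℝ) < (j:ℝ) + 1 := by positivity
      have hcj2 : (j:ℝ) + 1 ≤ c (kk j) := hkk2 j
      have h2 : ‖x (kk j) - y (kk j)‖ ≤ 2 * M := by
        have := hxM (kk j); have := hyM _ (hkk1 j)
        calc ‖x (kk j) - y (kk j)‖ ≤ ‖x (kk j)‖ + ‖y (kk j)‖ := norm_sub_le _ _
          _ ≤ 2 * M := by linarith
      have h1 := hvnorm (kk j)
      have h4 := norm_nonneg (v (kk j))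
      have h5 := hc (kk j)
      rw [show (2:ℝ) * M * (1 / ((j:ℝ) + 1)) = (2 * M) / ((j:ℝ) + 1) from by ring,
        le_div_iff₀ hcj]
      nlinarith
    · have := tendsto_one_div_add_atTop_nhds_zero_nat.const_mul (2*M)
      simpa using this

end bwd

/-- Theorem 3.11 (ZerBounded): under the summability conditions and one of the three listed
parameter conditions, `zer A ≠ ∅` if and only if the sequence `(x_k)` generated by the
generalized proximal point algorithm is bounded. -/
theorem stmt15 {H : Type*} [NormedAddCommGroup H] [InnerProductSpace ℝ H] [CompleteSpace H]
    (A : H → Set H)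
    (hmono : ∀ x y xu yv : H, xu ∈ A x → yv ∈ A y → 0 ≤ ⟪x - y, xu - yv⟫_ℝ)
    (hmax : ∀ x xu : H, (∀ y yv : H, yv ∈ A y → 0 ≤ ⟪x - y, xu - yv⟫_ℝ) → xu ∈ A x)
    (J : ℝ → H → H)
    (hJ : ∀ c : ℝ, 0 < c → ∀ x : H, (1 / c) • (x - J c x) ∈ A (J c x))
    (u : H) (e : ℕ → H) (c α β γ δ : ℕ → ℝ) (hc : ∀ k, 0 < c k)
    (x : ℕ → H)
    (hrec : ∀ k, x (k + 1) = α k • u + β k • x k + γ k • J (c k) (x k) + δ k • e k)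
    (ξ : ℕ → ℝ) (hξ : ∀ k, ξ k = |β k + γ k / 2| + |γ k / 2|)
    (hξ1 : ∀ k, ξ k ≤ 1)
    (hαsum : Summable (fun k => |α k|))
    (hβγsum : Summable (fun k => |1 - β k - γ k|))
    (hdesum : Summable (fun k => ‖δ k • e k‖))
    (hcase :
      -- (1)
      (Tendsto γ atTop (nhds 1) ∧
        ((∃ ε > (0 : ℝ), ∀ k, ε ≤ c k) ∨ Tendsto c atTop atTop)) ∨
      -- (2)
      ((∀ k, 0 ≤ γ k * (β k + γ k)) ∧
        (∃ r > (0 : ℝ), ∀ᶠ k in atTop, r ≤ γ k * (2 * β k + γ k)) ∧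
        ((∃ ε > (0 : ℝ), ∀ k, ε ≤ c k) ∨ Tendsto c atTop atTop) ∧
        (∃ r > (0 : ℝ), ∀ᶠ k in atTop, r ≤ |γ k|) ∧
        BddAbove (Set.range fun k => |β k|)) ∨
      -- (3)
      ((∀ k, 0 ≤ γ k * (β k + γ k)) ∧ (∀ k, 0 ≤ γ k * (2 * β k + γ k)) ∧
        (∀ k, |β k + γ k| * |γ k| ≤ max (1 - |β k|) (2 - 2 * |β k + γ k / 2|)) ∧
        Tendsto (fun n => ∑ k ∈ Finset.range n, γ k * (2 * β k + γ k)) atTop atTop ∧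
        (∃ ε > (0 : ℝ), ∀ k, ε ≤ c k) ∧
        Summable (fun k => |c (k + 1) - c k|) ∧
        (∃ r > (0 : ℝ), ∀ᶠ k in atTop, r ≤ |γ k|) ∧
        BddAbove (Set.range fun k => |β k|))) :
    (∃ p : H, (0 : H) ∈ A p) ↔ Bornology.IsBounded (Set.range x) := by
  have hξ1' : ∀ k, |β k + γ k / 2| + |γ k / 2| ≤ 1 := fun k => by rw [← hξ k]; exact hξ1 k
  constructor
  · rintro ⟨p, hp⟩
    exact forward_bounded A hmono J hJ u e c α β γ δ hc x hrec hξ1' hαsum hβγsum hdesum p hp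
  · intro hxb
    have hβγ0 : Tendsto (fun k => 1 - β k - γ k) atTop (nhds 0) := by
      rw [tendsto_zero_iff_norm_tendsto_zero]
      simpa [Real.norm_eq_abs] using hβγsum.tendsto_atTop_zero
    have hbγ1 : Tendsto (fun k => β k + γ k) atTop (nhds 1) := by
      have h2 : (fun k => β k + γ k) = fun k => 1 - (1 - β k - γ k) := by funext k; ring
      rw [h2]
      simpa using tendsto_const_nhds.sub hβγ0
    have hbγhalf : ∀ᶠ k in atTop, (1:ℝ)/2 ≤ β k + γ k :=
      hbγ1.eventually (eventually_ge_nhds (by norm_num : (1:ℝ)/2 < 1))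
    have hmain : (∃ r' > (0:ℝ), ∀ᶠ k in atTop, r' ≤ γ k) ∧
        (∃ B, ∀ᶠ k in atTop, |β k| ≤ B) ∧
        (∀ᶠ k in atTop, 0 ≤ γ k * (2 * β k + γ k)) ∧
        Tendsto (fun n => ∑ k ∈ Finset.range n, γ k * (2 * β k + γ k)) atTop atTop ∧
        ((∃ C, ∀ k, c k ≤ C) → ∃ ε > (0:ℝ), ∀ᶠ k in atTop, ε ≤ c k) := by
      have hcbd : ((∃ ε > (0 : ℝ), ∀ k, ε ≤ c k) ∨ Tendsto c atTop atTop) →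
          ((∃ C, ∀ k, c k ≤ C) → ∃ ε > (0:ℝ), ∀ᶠ k in atTop, ε ≤ c k) := by
        rintro (⟨ε, hε, h⟩ | htend) ⟨C, hC⟩
        · exact ⟨ε, hε, Eventually.of_forall h⟩
        · obtain ⟨k, hk⟩ := (htend.eventually_gt_atTop C).exists
          exact absurd (hC k) (not_le.2 hk)
      have hγlow23 : (∀ k, 0 ≤ γ k * (β k + γ k)) →
          (∃ r > (0 : ℝ), ∀ᶠ k in atTop, r ≤ |γ k|) →
          ∃ r' > (0:ℝ), ∀ᶠ k in atTop, r' ≤ γ k := by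
        rintro hγβγ ⟨r2, hr2, hγabs⟩
        refine ⟨r2, hr2, ?_⟩
        filter_upwards [hbγhalf, hγabs] with k h1 h2
        have hγ0 : 0 ≤ γ k := by
          by_contra h3
          push_neg at h3
          have h4 : γ k * (β k + γ k) < 0 :=
            mul_neg_of_neg_of_pos h3 (by linarith)
          exact absurd (hγβγ k) (not_le.2 h4)
        rwa [abs_of_nonneg hγ0] at h2
      rcases hcase with ⟨hγ1, hcc⟩ |
        ⟨hγβγ, ⟨r, hr, hgev⟩, hcc, hγa, hβb⟩ |
        ⟨hγβγ, hgnn0, -, hgdiv3, hce3, -, hγa, hβb⟩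
      · -- case 1
        have hβ0 : Tendsto β atTop (nhds 0) := by
          have h4 : Tendsto (fun k => (β k + γ k) - γ k) atTop (nhds (1 - 1)) :=
            hbγ1.sub hγ1
          norm_num at h4
          exact h4.congr (fun k => by ring)
        have hG : Tendsto (fun k => γ k * (2 * β k + γ k)) atTop (nhds 1) := by
          have h4 := hγ1.mul (((hβ0.const_mul 2)).add hγ1)
          simpa using h4
        have hGev : ∀ᶠ k in atTop, (1:ℝ)/2 ≤ γ k * (2 * β k + γ k) :=
          hG.eventually (eventually_ge_nhds (by norm_num : (1:ℝ)/2 < 1))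
        refine ⟨⟨1/2, by norm_num,
            hγ1.eventually (eventually_ge_nhds (by norm_num : (1:ℝ)/2 < 1))⟩,
          ⟨1, ?_⟩, ?_, sums_diverge (by norm_num : (0:ℝ) < 1/2) hGev, hcbd hcc⟩
        · have h5 : Tendsto (fun k => |β k|) atTop (nhds 0) := by
            simpa [Real.norm_eq_abs] using (tendsto_zero_iff_norm_tendsto_zero.1 hβ0)
          exact h5.eventually (eventually_le_nhds (by norm_num : (0:ℝ) < 1))
        · filter_upwards [hGev] with k hk; linarith
      · -- case 2
        obtain ⟨B, hB⟩ := hβb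
        refine ⟨hγlow23 hγβγ hγa, ⟨B, Eventually.of_forall fun k => hB ⟨k, rfl⟩⟩, ?_,
          sums_diverge hr hgev, hcbd hcc⟩
        filter_upwards [hgev] with k hk; linarith
      · -- case 3
        obtain ⟨B, hB⟩ := hβb
        exact ⟨hγlow23 hγβγ hγa, ⟨B, Eventually.of_forall fun k => hB ⟨k, rfl⟩⟩,
          Eventually.of_forall hgnn0, hgdiv3, fun _ => by
            obtain ⟨ε, hε, h⟩ := hce3
            exact ⟨ε, hε, Eventually.of_forall h⟩⟩
    obtain ⟨h1, h2, h3, h4, h5⟩ := hmain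
    exact backward_zero A hmono J hJ u e c α β γ δ hc x hrec hξ1' hαsum hβγsum hdesum
      h1 h2 h3 h4 h5 hxb
end

section
/- Suppose that zer A ≠ ∅, that for every k ∈ ℕ, ξ_k ≤ 1, that ∑_k |α_k| < ∞, ∑_k |1 − β_k − γ_k| < ∞ and ∑_k ‖δ_k e_k‖ < ∞, and that one of the following holds: (1) γ_k → 1, and either inf_k c_k > 0 or c_k → ∞; (2) limsup_{k→∞} |β_k| < 1, 0 < liminf_{k→∞} (1 − β_k − γ_k/2) ≤ limsup_{k→∞} (1 − β_k − γ_k/2) < 1, 1 − c_k/c_{k+1} → 0, and either inf_k c_k > 0 or c_k → ∞; (3) inf_{k∈ℕ} γ_k(β_k + γ_k) ≥ 0, liminf_{k→∞} γ_k(2β_k + γ_k) > 0, and either inf_k c_k > 0 or c_k → ∞; (4) inf_{k∈ℕ} γ_k(β_k + γ_k) ≥ 0 and inf_{k∈ℕ} γ_k(2β_k + γ_k) ≥ 0, ∑_k γ_k(2β_k + γ_k) = ∞, for every k, |β_k + γ_k|·|γ_k| ≤ max{1 − |β_k|, 2 − 2|β_k + γ_k/2|}, and inf_k c_k > 0 with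 ∑_k |c_{k+1} − c_k| < ∞. Then the sequence (x_k)_{k∈ℕ} converges weakly to a point of zer A; that is, there exists x ∈ zer A such that ⟨x_k, w⟩ → ⟨x, w⟩ for every w ∈ H. -/
/-!
A zero `p` of `A` is fixed by every resolvent and `‖x - J x‖² ≤ ⟪x - p, x - J x⟫`, so when
`ξ_k ≤ 1` the relaxed step `β (x - p) + γ (J x - p)` is no longer than `x - p`, and, when
`γ (β + γ) ≥ 0`, shorter by `γ (2β + γ) ‖x - J x‖²` in square norm. Up to summable errors, `‖x_k - p‖` is therefore
quasi-Fejér, hence convergent, and each of the four parameter regimes forces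
`x_k - J_{c_k} x_k → 0`; in regime (4) because `‖x_k - J_{c_k} x_k‖` is itself quasi-Fejér (by the
resolvent identity) while `∑ γ_k (2β_k + γ_k) ‖x_k - J_{c_k} x_k‖² < ∞ = ∑ γ_k (2β_k + γ_k)`.
Then `(x_k - J_{c_k} x_k) / c_k ∈ A (J_{c_k} x_k)` tends to `0`, so by maximal monotonicity every
weak cluster point of `(x_k)` is a zero of `A`, and Opial's argument gives weak convergence.
-/

open Filter Topology InnerProductSpace

theorem exists_tendsto_of_le_add_of_summable {d η : ℕ → ℝ} (hd : ∀ k, 0 ≤ d k)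
    (hη : ∀ k, 0 ≤ η k) (hη_sum : Summable η) (hstep : ∀ k, d (k + 1) ≤ d k + η k) :
    ∃ l, Tendsto d atTop (𝓝 l) := by
  -- `d k + ∑_{j ≥ k} η j` is antitone and bounded below
  set D : ℕ → ℝ := fun k => d k + ∑' j, η (j + k)
  have hD : Antitone D := antitone_nat_of_succ_le fun k => by
    have hsplit := ((summable_nat_add_iff k).2 hη_sum).tsum_eq_zero_add
    simp only [zero_add, add_right_comm _ 1 k] at hsplit
    simp only [D, hsplit, ← add_assoc]
    linarith [hstep k]
  have hbdd : BddBelow (Set.range D) :=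
    ⟨0, by rintro _ ⟨k, rfl⟩; exact add_nonneg (hd k) (tsum_nonneg fun j => hη _)⟩
  exact ⟨_, by simpa [D] using (tendsto_atTop_ciInf hD hbdd).sub (tendsto_sum_nat_add η)⟩

theorem MapClusterPt.le_of_le_add {t θ : ℕ → ℝ} {r b : ℝ} (h : MapClusterPt r atTop t)
    (hθ : Tendsto θ atTop (𝓝 0)) (hle : ∀ k, t k ≤ b + θ k) : r ≤ b := by
  obtain ⟨φ, hφ, htφ⟩ := h.tendsto_subseq
  have hbθ : Tendsto (fun k => b + θ (φ k)) atTop (𝓝 b) := by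
    simpa using tendsto_const_nhds.add (hθ.comp hφ.tendsto_atTop)
  exact le_of_tendsto_of_tendsto' htφ hbθ fun k => hle (φ k)

theorem MapClusterPt.eq_of_tendsto {X : Type*} [TopologicalSpace X] [FirstCountableTopology X]
    [T2Space X] {t : ℕ → X} {r l : X} (h : MapClusterPt r atTop t)
    (ht : Tendsto t atTop (𝓝 l)) : r = l := by
  obtain ⟨φ, hφ, htφ⟩ := h.tendsto_subseq
  exact tendsto_nhds_unique htφ (ht.comp hφ.tendsto_atTop)

theorem nonpos_of_tendsto_of_summable_mul {a b : ℕ → ℝ} {L : ℝ} (ha : ∀ k, 0 ≤ a k)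
    (ha_sum : ¬Summable a) (hab : Summable fun k => a k * b k) (hb : Tendsto b atTop (𝓝 L)) :
    L ≤ 0 := by
  by_contra! hL
  refine ha_sum (.of_norm_bounded_eventually_nat (hab.mul_left (2 / L)) ?_)
  filter_upwards [hb.eventually (lt_mem_nhds (half_lt_self hL))] with k hk
  have hk' : 1 ≤ 2 / L * b k := by rw [div_mul_eq_mul_div, le_div_iff₀ hL]; linarith
  rw [Real.norm_of_nonneg (ha k)]
  nlinarith [ha k]

theorem summable_of_le_sub_add {f s η : ℕ → ℝ} (hf : ∀ k, 0 ≤ f k) (hs : ∀ k, 0 ≤ s k)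
    (hη : ∀ k, 0 ≤ η k) (hη_sum : Summable η) (hle : ∀ k, f k ≤ s k - s (k + 1) + η k) :
    Summable f := by
  refine summable_of_sum_range_le hf (c := s 0 + ∑' k, η k) fun n => ?_
  calc ∑ k ∈ Finset.range n, f k ≤ ∑ k ∈ Finset.range n, (s k - s (k + 1) + η k) :=
        Finset.sum_le_sum fun k _ => hle k
    _ = s 0 - s n + ∑ k ∈ Finset.range n, η k := by
        rw [Finset.sum_add_distrib, Finset.sum_range_sub']
    _ ≤ s 0 + ∑' k, η k := by
        linarith [hs n, hη_sum.sum_le_tsum (Finset.range n) fun k _ => hη k]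

theorem eventually_relaxation_pos_of_tendsto_one {β γ : ℕ → ℝ} (hγ : Tendsto γ atTop (𝓝 1))
    (hβγ : Tendsto (fun k => 1 - β k - γ k) atTop (𝓝 0)) :
    ∃ ρ > 0, ∀ᶠ k in atTop, 0 ≤ γ k * (β k + γ k) ∧ ρ ≤ γ k * (2 * β k + γ k) := by
  have hβ : Tendsto β atTop (𝓝 0) := by
    have h := (tendsto_const_nhds (x := (1 : ℝ)).sub hγ).sub hβγ
    rw [sub_self, sub_zero] at h
    exact h.congr fun k => by ring
  have h₁ : Tendsto (fun k => γ k * (β k + γ k)) atTop (𝓝 1) := by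
    simpa using hγ.mul (hβ.add hγ)
  have h₂ : Tendsto (fun k => γ k * (2 * β k + γ k)) atTop (𝓝 1) := by
    simpa using hγ.mul ((hβ.const_mul 2).add hγ)
  refine ⟨1 / 2, by norm_num, ?_⟩
  filter_upwards [h₁.eventually (lt_mem_nhds zero_lt_one),
    h₂.eventually (lt_mem_nhds (by norm_num : (1 / 2 : ℝ) < 1))] with k hk₁ hk₂
  exact ⟨hk₁.le, hk₂.le⟩

theorem eventually_relaxation_pos_of_abs_le {β γ : ℕ → ℝ} (hβ : ∃ r < 1, ∀ᶠ k in atTop, |β k| ≤ r)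
    (hb : ∃ b < 1, ∀ᶠ k in atTop, 1 - β k - γ k / 2 ≤ b)
    (hβγ : Tendsto (fun k => 1 - β k - γ k) atTop (𝓝 0)) :
    ∃ ρ > 0, ∀ᶠ k in atTop, 0 ≤ γ k * (β k + γ k) ∧ ρ ≤ γ k * (2 * β k + γ k) := by
  obtain ⟨r, hr, hβr⟩ := hβ
  obtain ⟨b, hb, hβb⟩ := hb
  -- eventually `γ k ≥ (1 - r) / 2` and `2 β k + γ k ≥ 2 - 2 b`
  refine ⟨(1 - r) / 2 * (2 - 2 * b), by nlinarith, ?_⟩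
  filter_upwards [hβr, hβb, (tendsto_order.1 hβγ).2 _ (by linarith : (0 : ℝ) < (1 - r) / 2),
    (tendsto_order.1 hβγ).1 _ (by linarith : -((1 - r) / 2) < 0)] with k hk₁ hk₂ hk₃ hk₄
  have hγ : (1 - r) / 2 ≤ γ k := by linarith [le_abs_self (β k)]
  exact ⟨mul_nonneg (by linarith) (by linarith), by nlinarith⟩

section Hilbert

variable {H : Type*} [NormedAddCommGroup H] [InnerProductSpace ℝ H]

theorem norm_smul_add_smul_sub_le {a v : H} {β γ : ℝ} (hv : ‖v‖ ^ 2 ≤ ⟪a, v⟫_ℝ)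
    (hξ : |β + γ / 2| + |γ / 2| ≤ 1) : ‖β • a + γ • (a - v)‖ ≤ ‖a‖ := by
  have hrefl : ‖a - (2 : ℝ) • v‖ ≤ ‖a‖ := by
    refine (sq_le_sq₀ (norm_nonneg _) (norm_nonneg _)).1 ?_
    rw [norm_sub_sq_real, real_inner_smul_right, norm_smul, Real.norm_of_nonneg zero_le_two]
    nlinarith
  calc ‖β • a + γ • (a - v)‖ = ‖(β + γ / 2) • a + (γ / 2) • (a - (2 : ℝ) • v)‖ := by
        congr 1; module
    _ ≤ |β + γ / 2| * ‖a‖ + |γ / 2| * ‖a - (2 : ℝ) • v‖ := by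
        simpa only [norm_smul, Real.norm_eq_abs] using
          norm_add_le ((β + γ / 2) • a) ((γ / 2) • (a - (2 : ℝ) • v))
    _ ≤ (|β + γ / 2| + |γ / 2|) * ‖a‖ := by nlinarith [abs_nonneg (γ / 2)]
    _ ≤ ‖a‖ := mul_le_of_le_one_left (norm_nonneg a) hξ

theorem norm_smul_add_smul_sub_sq_le {a v : H} {β γ : ℝ} (hv : ‖v‖ ^ 2 ≤ ⟪a, v⟫_ℝ)
    (hξ : |β + γ / 2| + |γ / 2| ≤ 1) (hγ : 0 ≤ γ * (β + γ)) :
    ‖β • a + γ • (a - v)‖ ^ 2 ≤ ‖a‖ ^ 2 - γ * (2 * β + γ) * ‖v‖ ^ 2 := by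
  have hβγ : (β + γ) ^ 2 ≤ 1 := by
    rw [sq_le_one_iff_abs_le_one]
    calc |β + γ| = |(β + γ / 2) + γ / 2| := by ring_nf
      _ ≤ 1 := (abs_add_le _ _).trans hξ
  have hsplit : β • a + γ • (a - v) = (β + γ) • a - γ • v := by module
  rw [hsplit, norm_sub_sq_real, real_inner_smul_left, real_inner_smul_right, norm_smul,
    norm_smul, mul_pow, mul_pow, Real.norm_eq_abs, Real.norm_eq_abs, sq_abs, sq_abs]
  nlinarith [mul_nonneg hγ (sub_nonneg.2 hv), mul_nonneg (sub_nonneg.2 hβγ) (sq_nonneg ‖a‖)]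

theorem norm_le_of_sq_norm_sub_le_inner {v w : H} {β : ℝ} (hβ : |β| ≤ 1)
    (h : ‖w - v‖ ^ 2 ≤ -(1 - β) * ⟪v, w - v⟫_ℝ) : ‖w‖ ≤ ‖v‖ := by
  obtain ⟨hβl, hβu⟩ := abs_le.1 hβ
  rcases hβu.lt_or_eq with hβ1 | rfl
  · have hw : ‖w‖ ^ 2 = ‖v‖ ^ 2 + 2 * ⟪v, w - v⟫_ℝ + ‖w - v‖ ^ 2 := by
      rw [← norm_add_sq_real, add_sub_cancel]
    -- `(1 - β) (2 ⟪v, w - v⟫ + ‖w - v‖²) ≤ -(1 + β) ‖w - v‖² ≤ 0`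
    have key : (1 - β) * (2 * ⟪v, w - v⟫_ℝ + ‖w - v‖ ^ 2) ≤ 0 := by
      nlinarith [sq_nonneg ‖w - v‖]
    refine (sq_le_sq₀ (norm_nonneg _) (norm_nonneg _)).1 ?_
    nlinarith [(mul_nonpos_iff_pos_imp_nonpos.1 key).1 (by linarith)]
  · have hwv : ‖w - v‖ = 0 := by
      simp only [sub_self, neg_zero, zero_mul] at h
      exact pow_eq_zero_iff two_ne_zero |>.1 (le_antisymm h (sq_nonneg _))
    rw [norm_sub_eq_zero_iff.1 hwv]

def IsMonotoneOperator (A : H → Set H) : Prop :=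
  ∀ x y u v : H, u ∈ A x → v ∈ A y → 0 ≤ ⟪x - y, u - v⟫_ℝ

def IsResolvent (A : H → Set H) (J : ℝ → H → H) : Prop :=
  ∀ c : ℝ, 0 < c → ∀ x : H, (1 / c) • (x - J c x) ∈ A (J c x)

namespace IsResolvent

variable {A : H → Set H} {J : ℝ → H → H} (hJ : IsResolvent A J) (hA : IsMonotoneOperator A)
  {c : ℝ} (hc : 0 < c)
include hJ hA hc

theorem inner_sub_nonneg (x y : H) :
    0 ≤ ⟪J c x - J c y, (x - J c x) - (y - J c y)⟫_ℝ := by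
  have h := hA _ _ _ _ (hJ c hc x) (hJ c hc y)
  rw [← smul_sub, real_inner_smul_right] at h
  exact (mul_nonneg_iff_of_pos_left (by positivity)).1 h

theorem sq_norm_sub_le_inner (x y : H) :
    ‖(x - J c x) - (y - J c y)‖ ^ 2 ≤ ⟪x - y, (x - J c x) - (y - J c y)⟫_ℝ := by
  have hxy : x - y = (J c x - J c y) + ((x - J c x) - (y - J c y)) := by abel
  rw [hxy, inner_add_left, real_inner_self_eq_norm_sq]
  linarith [hJ.inner_sub_nonneg hA hc x y]

theorem sq_norm_sub_add_sq_norm_sub_le (x y : H) :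
    ‖J c x - J c y‖ ^ 2 + ‖(x - J c x) - (y - J c y)‖ ^ 2 ≤ ‖x - y‖ ^ 2 := by
  have hxy : x - y = (J c x - J c y) + ((x - J c x) - (y - J c y)) := by abel
  rw [hxy, norm_add_sq_real]
  linarith [hJ.inner_sub_nonneg hA hc x y]

theorem norm_sub_le (x y : H) : ‖J c x - J c y‖ ≤ ‖x - y‖ :=
  (sq_le_sq₀ (norm_nonneg _) (norm_nonneg _)).1 <| by
    nlinarith [hJ.sq_norm_sub_add_sq_norm_sub_le hA hc x y]

theorem norm_sub_sub_le (x y : H) : ‖(x - J c x) - (y - J c y)‖ ≤ ‖x - y‖ :=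
  (sq_le_sq₀ (norm_nonneg _) (norm_nonneg _)).1 <| by
    nlinarith [hJ.sq_norm_sub_add_sq_norm_sub_le hA hc x y]

theorem eq_apply_of_mem {w q : H} (hq : (1 / c) • (w - q) ∈ A q) : q = J c w := by
  have h := hA _ _ _ _ hq (hJ c hc w)
  have hsub : w - q - (w - J c w) = -(q - J c w) := by abel
  rw [← smul_sub, hsub, real_inner_smul_right, inner_neg_right, real_inner_self_eq_norm_sq] at h
  have : ‖q - J c w‖ ^ 2 ≤ 0 := by nlinarith [one_div_pos.2 hc]
  exact norm_sub_eq_zero_iff.1 (pow_eq_zero_iff two_ne_zero |>.1 (le_antisymm this (sq_nonneg _)))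

theorem apply_eq_self {p : H} (hp : 0 ∈ A p) : J c p = p :=
  (hJ.eq_apply_of_mem hA hc (by simpa using hp)).symm

theorem norm_sub_apply_le_norm_sub {p : H} (hp : 0 ∈ A p) (x : H) :
    ‖x - J c x‖ ≤ ‖x - p‖ := by
  simpa [hJ.apply_eq_self hA hc hp] using hJ.norm_sub_sub_le hA hc x p

theorem norm_apply_sub_le {p : H} (hp : 0 ∈ A p) (x : H) : ‖J c x - p‖ ≤ ‖x - p‖ := by
  simpa [hJ.apply_eq_self hA hc hp] using hJ.norm_sub_le hA hc x p

theorem norm_apply_le_add {p : H} (hp : 0 ∈ A p) (x : H) : ‖J c x‖ ≤ ‖x - p‖ + ‖p‖ := by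
  linarith [norm_le_insert' (J c x) p, hJ.norm_apply_sub_le hA hc hp x]

theorem sq_norm_sub_apply_le_inner {p : H} (hp : 0 ∈ A p) (x : H) :
    ‖x - J c x‖ ^ 2 ≤ ⟪x - p, x - J c x⟫_ℝ := by
  simpa [hJ.apply_eq_self hA hc hp] using hJ.sq_norm_sub_le_inner hA hc x p

theorem norm_apply_sub_apply_le {c' : ℝ} (hc' : 0 < c') (z : H) :
    ‖J c z - J c' z‖ ≤ |c - c'| / c' * ‖z - J c' z‖ := by
  set q := J c' z
  -- resolvent identity: `J c' z = J c w` for this point `w` of the line through `z` and `J c' z`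
  set w := (c / c') • z + (1 - c / c') • q
  have hwq : w - q = (c / c') • (z - q) := by module
  have hq : q = J c w := by
    refine hJ.eq_apply_of_mem hA hc ?_
    have hres : (1 / c) • (w - q) = (1 / c') • (z - q) := by
      rw [hwq, smul_smul]; congr 1; field_simp
    exact hres ▸ hJ c' hc' z
  have hzw : z - w = ((c' - c) / c') • (z - q) := by
    have : (c' - c) / c' = 1 - c / c' := by field_simp
    rw [this]; module
  calc ‖J c z - J c' z‖ = ‖J c z - J c w‖ := by rw [← hq]
    _ ≤ ‖z - w‖ := hJ.norm_sub_le hA hc z w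
    _ = |c - c'| / c' * ‖z - J c' z‖ := by
        rw [hzw, norm_smul, Real.norm_eq_abs, abs_div, abs_of_pos hc', abs_sub_comm]

theorem norm_sub_apply_average_le {β : ℝ} (hβ : |β| ≤ 1) (x : H) :
    ‖(β • x + (1 - β) • J c x) - J c (β • x + (1 - β) • J c x)‖ ≤ ‖x - J c x‖ := by
  refine norm_le_of_sq_norm_sub_le_inner hβ ?_
  have h := hJ.sq_norm_sub_le_inner hA hc (β • x + (1 - β) • J c x) x
  have hyx : β • x + (1 - β) • J c x - x = -(1 - β) • (x - J c x) := by module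
  rwa [hyx, real_inner_smul_left] at h

end IsResolvent

theorem eq_of_mapClusterPt_inner_of_tendsto_norm_sub {x : ℕ → H} {z₁ z₂ : H} {l₁ l₂ : ℝ}
    (h₁ : Tendsto (fun k => ‖x k - z₁‖) atTop (𝓝 l₁))
    (h₂ : Tendsto (fun k => ‖x k - z₂‖) atTop (𝓝 l₂))
    (hc₁ : MapClusterPt ⟪z₁, z₁ - z₂⟫_ℝ atTop (fun k => ⟪x k, z₁ - z₂⟫_ℝ))
    (hc₂ : MapClusterPt ⟪z₂, z₁ - z₂⟫_ℝ atTop (fun k => ⟪x k, z₁ - z₂⟫_ℝ)) : z₁ = z₂ := by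
  have hpolar : ∀ k, ⟪x k, z₁ - z₂⟫_ℝ
      = (‖x k - z₂‖ ^ 2 - ‖x k - z₁‖ ^ 2 + ‖z₁‖ ^ 2 - ‖z₂‖ ^ 2) / 2 := fun k => by
    rw [norm_sub_sq_real, norm_sub_sq_real, inner_sub_right]; ring
  have hlim : Tendsto (fun k => ⟪x k, z₁ - z₂⟫_ℝ) atTop
      (𝓝 ((l₂ ^ 2 - l₁ ^ 2 + ‖z₁‖ ^ 2 - ‖z₂‖ ^ 2) / 2)) := by
    simp_rw [hpolar]
    exact ((((h₂.pow 2).sub (h₁.pow 2)).add_const _).sub_const _).div_const _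
  have h : ⟪z₁ - z₂, z₁ - z₂⟫_ℝ = 0 := by
    rw [inner_sub_left, hc₁.eq_of_tendsto hlim, hc₂.eq_of_tendsto hlim, sub_self]
  exact sub_eq_zero.1 (inner_self_eq_zero.1 h)

theorem exists_tendsto_inner_of_forall_mapClusterPt [CompleteSpace H] {x : ℕ → H} {S : Set H}
    (hS : S.Nonempty) (hfejer : ∀ z ∈ S, ∃ l, Tendsto (fun k => ‖x k - z‖) atTop (𝓝 l))
    (hclus : ∀ z, (∀ w, MapClusterPt ⟪z, w⟫_ℝ atTop (fun k => ⟪x k, w⟫_ℝ)) → z ∈ S) :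
    ∃ z ∈ S, ∀ w, Tendsto (fun k => ⟪x k, w⟫_ℝ) atTop (𝓝 ⟪z, w⟫_ℝ) := by
  -- Via the Riesz map `ι`, `(x k)` lies in a weak-* compact ball (Banach–Alaoglu), where a sequence
  -- whose cluster points all coincide converges.
  obtain ⟨p, hp⟩ := hS
  obtain ⟨l, hl⟩ := hfejer p hp
  obtain ⟨B, hB⟩ := hl.bddAbove_range
  let ι : H → WeakDual ℝ H := fun z => StrongDual.toWeakDual (toDual ℝ H z)
  have hιw : ∀ z w, ι z w = ⟪z, w⟫_ℝ := fun _ _ => rfl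
  have hιsurj : ∀ f, ι ((toDual ℝ H).symm (WeakDual.toStrongDual f)) = f := fun f => by
    simp [ι]
  set K := WeakDual.toStrongDual ⁻¹' Metric.closedBall (0 : StrongDual ℝ H) (B + ‖p‖)
  have hK : IsCompact K := WeakDual.isCompact_closedBall _ _
  have hxK : ∀ k, ι (x k) ∈ K := fun k => by
    have hxk : ‖x k‖ ≤ ‖p‖ + ‖x k - p‖ := norm_le_insert' (x k) p
    have hBk : ‖x k - p‖ ≤ B := hB ⟨k, rfl⟩
    simp only [K, Set.mem_preimage, mem_closedBall_zero_iff]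
    change ‖toDual ℝ H (x k)‖ ≤ B + ‖p‖
    rw [LinearIsometryEquiv.norm_map]
    linarith
  have hclusS : ∀ f, MapClusterPt f atTop (ι ∘ x) →
      ∃ z ∈ S, ι z = f ∧ ∀ w, MapClusterPt ⟪z, w⟫_ℝ atTop (fun k => ⟪x k, w⟫_ℝ) := by
    intro f hf
    set z := (toDual ℝ H).symm (WeakDual.toStrongDual f)
    have hz : ∀ w, MapClusterPt ⟪z, w⟫_ℝ atTop (fun k => ⟪x k, w⟫_ℝ) := fun w => by
      rw [← hιw, hιsurj]
      exact hf.tendsto_comp (WeakDual.eval_continuous w).continuousAt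
    exact ⟨z, hclus z hz, hιsurj f, hz⟩
  obtain ⟨f₀, -, hf₀⟩ := hK.exists_mapClusterPt (u := ι ∘ x) (f := atTop)
    (le_principal_iff.2 (mem_map.2 (Eventually.of_forall hxK)))
  obtain ⟨z, hzS, rfl, hz⟩ := hclusS f₀ hf₀
  have hlim : Tendsto (ι ∘ x) atTop (𝓝 (ι z)) := by
    refine hK.tendsto_nhds_of_unique_mapClusterPt (Eventually.of_forall hxK) fun f _ hf => ?_
    obtain ⟨z', hz'S, rfl, hz'⟩ := hclusS f hf
    obtain ⟨l', hl'⟩ := hfejer z' hz'S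
    obtain ⟨l'', hl''⟩ := hfejer z hzS
    rw [eq_of_mapClusterPt_inner_of_tendsto_norm_sub hl' hl'' (hz' _) (hz _)]
  exact ⟨z, hzS, fun w => ((WeakDual.eval_continuous w).tendsto _).comp hlim⟩

theorem IsMonotoneOperator.zero_mem_of_mapClusterPt {A : H → Set H} (hA : IsMonotoneOperator A)
    (hmax : ∀ x u : H, (∀ y v : H, v ∈ A y → 0 ≤ ⟪x - y, u - v⟫_ℝ) → u ∈ A x)
    {x y g : ℕ → H} (hg : ∀ k, g k ∈ A (y k)) (hg0 : Tendsto g atTop (𝓝 0))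
    (hxy : Tendsto (fun k => x k - y k) atTop (𝓝 0)) (hy : ∃ B, ∀ k, ‖y k‖ ≤ B) {z : H}
    (hz : ∀ w, MapClusterPt ⟪z, w⟫_ℝ atTop (fun k => ⟪x k, w⟫_ℝ)) : 0 ∈ A z := by
  refine hmax z 0 fun a v hv => ?_
  obtain ⟨B, hB⟩ := hy
  set θ : ℕ → ℝ := fun k => ⟪y k - a, g k⟫_ℝ + ⟪x k - y k, v⟫_ℝ
  have hθ : Tendsto θ atTop (𝓝 0) := by
    have h₁ : Tendsto (fun k => ⟪y k - a, g k⟫_ℝ) atTop (𝓝 0) := by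
      refine squeeze_zero_norm (fun k => ?_) (by simpa using hg0.norm.const_mul (B + ‖a‖))
      refine (abs_real_inner_le_norm _ _).trans (mul_le_mul_of_nonneg_right ?_ (norm_nonneg _))
      exact (norm_sub_le _ _).trans (by linarith [hB k])
    simpa using h₁.add (hxy.inner tendsto_const_nhds)
  have hle : ∀ k, ⟪x k, v⟫_ℝ ≤ ⟪a, v⟫_ℝ + θ k := fun k => by
    have hmono := hA _ _ _ _ (hg k) hv
    have hsplit : x k = (y k - a) + (x k - y k) + a := by abel
    rw [inner_sub_right] at hmono
    rw [hsplit, inner_add_left, inner_add_left]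
    linarith
  have := (hz v).le_of_le_add hθ hle
  rw [zero_sub, inner_neg_right, inner_sub_left]
  linarith

theorem tendsto_one_div_smul_of_tendsto_zero {c : ℕ → ℝ} {v : ℕ → H}
    (hv : Tendsto v atTop (𝓝 0)) (hc : (∃ ε > 0, ∀ k, ε ≤ c k) ∨ Tendsto c atTop atTop) :
    Tendsto (fun k => (1 / c k) • v k) atTop (𝓝 0) := by
  rcases hc with ⟨ε, hε, hεc⟩ | hc
  · refine IsBoundedUnder.smul_tendsto_zero (isBoundedUnder_of ⟨1 / ε, fun k => ?_⟩) hv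
    have hck : 0 < c k := hε.trans_le (hεc k)
    simpa [abs_of_pos hck] using one_div_le_one_div_of_le hε (hεc k)
  · exact (tendsto_const_nhds.div_atTop hc).zero_smul_isBoundedUnder_le hv.norm.isBoundedUnder_le

theorem norm_iterate_sub_le_norm_step_add {J : ℝ → H → H} {c β γ : ℕ → ℝ} {x r : ℕ → H}
    (hrec : ∀ k, x (k + 1) = β k • x k + γ k • J (c k) (x k) + r k) (p : H) (k : ℕ) :
    ‖x (k + 1) - p‖ ≤ ‖β k • (x k - p) + γ k • ((x k - p) - (x k - J (c k) (x k)))‖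
      + (‖r k‖ + |1 - β k - γ k| * ‖p‖) := by
  have hsplit : x (k + 1) - p = (β k • (x k - p) + γ k • ((x k - p) - (x k - J (c k) (x k))))
      + (r k - (1 - β k - γ k) • p) := by
    rw [hrec k]; module
  rw [hsplit]
  refine (norm_add_le _ _).trans (add_le_add_right ((norm_sub_le _ _).trans ?_) _)
  rw [norm_smul, Real.norm_eq_abs]

section Iteration

variable {A : H → Set H} {J : ℝ → H → H} {c β γ : ℕ → ℝ} {x r : ℕ → H} {p : H}
  (hA : IsMonotoneOperator A) (hJ : IsResolvent A J) (hc : ∀ k, 0 < c k)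
  (hrec : ∀ k, x (k + 1) = β k • x k + γ k • J (c k) (x k) + r k)
  (hξ : ∀ k, |β k + γ k / 2| + |γ k / 2| ≤ 1) (hp : 0 ∈ A p)
include hA hJ hc hrec hξ hp

theorem norm_iterate_sub_le (k : ℕ) :
    ‖x (k + 1) - p‖ ≤ ‖x k - p‖ + (‖r k‖ + |1 - β k - γ k| * ‖p‖) := by
  have := norm_smul_add_smul_sub_le (hJ.sq_norm_sub_apply_le_inner hA (hc k) hp (x k)) (hξ k)
  linarith [norm_iterate_sub_le_norm_step_add hrec p k]

theorem exists_tendsto_norm_iterate_sub (hr : Summable fun k => ‖r k‖)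
    (hβγ : Summable fun k => |1 - β k - γ k|) :
    ∃ l, Tendsto (fun k => ‖x k - p‖) atTop (𝓝 l) :=
  exists_tendsto_of_le_add_of_summable (fun _ => norm_nonneg _) (fun _ => by positivity)
    (hr.add (hβγ.mul_right _)) (norm_iterate_sub_le hA hJ hc hrec hξ hp)

theorem exists_norm_iterate_sub_le (hr : Summable fun k => ‖r k‖)
    (hβγ : Summable fun k => |1 - β k - γ k|) : ∃ M, ∀ k, ‖x k - p‖ ≤ M := by
  obtain ⟨l, hl⟩ := exists_tendsto_norm_iterate_sub hA hJ hc hrec hξ hp hr hβγ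
  obtain ⟨M, hM⟩ := hl.bddAbove_range
  exact ⟨M, fun k => hM ⟨k, rfl⟩⟩

theorem mul_sq_norm_displacement_le {M : ℝ} (hM : ∀ k, ‖x k - p‖ ≤ M) {k : ℕ}
    (hγ : 0 ≤ γ k * (β k + γ k)) :
    γ k * (2 * β k + γ k) * ‖x k - J (c k) (x k)‖ ^ 2
      ≤ ‖x k - p‖ ^ 2 - ‖x (k + 1) - p‖ ^ 2 + 2 * M * (‖r k‖ + |1 - β k - γ k| * ‖p‖) := by
  have hv := hJ.sq_norm_sub_apply_le_inner hA (hc k) hp (x k)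
  have hs := norm_smul_add_smul_sub_le hv (hξ k)
  have hs2 := norm_smul_add_smul_sub_sq_le hv (hξ k) hγ
  have ht := norm_iterate_sub_le_norm_step_add hrec p k
  have hη : 0 ≤ ‖r k‖ + |1 - β k - γ k| * ‖p‖ := by positivity
  nlinarith [hM k, hM (k + 1), norm_nonneg (x (k + 1) - p),
    norm_nonneg (β k • (x k - p) + γ k • ((x k - p) - (x k - J (c k) (x k))))]

theorem tendsto_norm_displacement_of_eventually (hr : Summable fun k => ‖r k‖)
    (hβγ : Summable fun k => |1 - β k - γ k|)
    (hγ : ∃ ρ > 0, ∀ᶠ k in atTop, 0 ≤ γ k * (β k + γ k) ∧ ρ ≤ γ k * (2 * β k + γ k)) :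
    Tendsto (fun k => ‖x k - J (c k) (x k)‖) atTop (𝓝 0) := by
  obtain ⟨ρ, hρ, hγ⟩ := hγ
  obtain ⟨l, hl⟩ := exists_tendsto_norm_iterate_sub hA hJ hc hrec hξ hp hr hβγ
  obtain ⟨M, hM⟩ := exists_norm_iterate_sub_le hA hJ hc hrec hξ hp hr hβγ
  have hη := (hr.add (hβγ.mul_right ‖p‖)).tendsto_atTop_zero
  have hbound : Tendsto (fun k => (‖x k - p‖ ^ 2 - ‖x (k + 1) - p‖ ^ 2
      + 2 * M * (‖r k‖ + |1 - β k - γ k| * ‖p‖)) / ρ) atTop (𝓝 0) := by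
    simpa using (((hl.pow 2).sub ((hl.pow 2).comp (tendsto_add_atTop_nat 1))).add
      (hη.const_mul (2 * M))).div_const ρ
  have hsq : Tendsto (fun k => ‖x k - J (c k) (x k)‖ ^ 2) atTop (𝓝 0) := by
    refine squeeze_zero' (.of_forall fun k => sq_nonneg _) ?_ hbound
    filter_upwards [hγ] with k hk
    rw [le_div_iff₀ hρ]
    nlinarith [mul_sq_norm_displacement_le hA hJ hc hrec hξ hp hM hk.1,
      sq_nonneg ‖x k - J (c k) (x k)‖]
  simpa [Real.sqrt_sq (norm_nonneg _)] using hsq.sqrt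

theorem norm_displacement_succ_le {M : ℝ} (hM : ∀ k, ‖x k - p‖ ≤ M) (k : ℕ) :
    ‖x (k + 1) - J (c (k + 1)) (x (k + 1))‖ ≤ ‖x k - J (c k) (x k)‖
      + (‖r k‖ + |1 - β k - γ k| * (M + ‖p‖) + |c (k + 1) - c k| / c k * M) := by
  -- compare `x (k + 1)` with the averaged point `y`, whose displacement is at most that of `x k`
  set y := β k • x k + (1 - β k) • J (c k) (x k)
  have hM0 : 0 ≤ M := (norm_nonneg _).trans (hM 0)
  have hβ : |β k| ≤ 1 := by
    calc |β k| = |(β k + γ k / 2) - γ k / 2| := by ring_nf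
      _ ≤ 1 := (abs_sub _ _).trans (hξ k)
  have hJx : ‖J (c k) (x k)‖ ≤ M + ‖p‖ := by
    linarith [hJ.norm_apply_le_add hA (hc k) hp (x k), hM k]
  have hy : ‖x (k + 1) - y‖ ≤ ‖r k‖ + |1 - β k - γ k| * (M + ‖p‖) := by
    have hsub : x (k + 1) - y = r k - (1 - β k - γ k) • J (c k) (x k) := by
      rw [hrec k]; module
    rw [hsub]
    refine (norm_sub_le _ _).trans (add_le_add_right ?_ _)
    rw [norm_smul, Real.norm_eq_abs]
    exact mul_le_mul_of_nonneg_left hJx (abs_nonneg _)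
  have h₁ : ‖x (k + 1) - J (c k) (x (k + 1))‖ ≤ ‖x k - J (c k) (x k)‖ + ‖x (k + 1) - y‖ := by
    have := hJ.norm_sub_sub_le hA (hc k) (x (k + 1)) y
    linarith [hJ.norm_sub_apply_average_le hA (hc k) hβ (x k),
      norm_le_insert' (x (k + 1) - J (c k) (x (k + 1))) (y - J (c k) y)]
  have h₂ : ‖J (c (k + 1)) (x (k + 1)) - J (c k) (x (k + 1))‖ ≤ |c (k + 1) - c k| / c k * M :=
    (hJ.norm_apply_sub_apply_le hA (hc (k + 1)) (hc k) _).trans <|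
      mul_le_mul_of_nonneg_left ((hJ.norm_sub_apply_le_norm_sub hA (hc k) hp _).trans (hM _))
        (div_nonneg (abs_nonneg _) (hc k).le)
  calc ‖x (k + 1) - J (c (k + 1)) (x (k + 1))‖
      ≤ ‖x (k + 1) - J (c k) (x (k + 1))‖ + ‖J (c (k + 1)) (x (k + 1)) - J (c k) (x (k + 1))‖ := by
        rw [norm_sub_rev (J (c (k + 1)) _)]
        exact norm_sub_le_norm_sub_add_norm_sub _ _ _
    _ ≤ _ := by linarith

theorem tendsto_norm_displacement_of_summable (hr : Summable fun k => ‖r k‖)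
    (hβγ : Summable fun k => |1 - β k - γ k|) (hγ₁ : ∀ k, 0 ≤ γ k * (β k + γ k))
    (hγ₂ : ∀ k, 0 ≤ γ k * (2 * β k + γ k))
    (hγ_sum : Tendsto (fun n => ∑ k ∈ Finset.range n, γ k * (2 * β k + γ k)) atTop atTop)
    (hcε : ∃ ε > 0, ∀ k, ε ≤ c k) (hc_var : Summable fun k => |c (k + 1) - c k|) :
    Tendsto (fun k => ‖x k - J (c k) (x k)‖) atTop (𝓝 0) := by
  obtain ⟨ε, hε, hεc⟩ := hcε
  obtain ⟨M, hM⟩ := exists_norm_iterate_sub_le hA hJ hc hrec hξ hp hr hβγ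
  have hM0 : 0 ≤ M := (norm_nonneg _).trans (hM 0)
  have hsum : Summable fun k => γ k * (2 * β k + γ k) * ‖x k - J (c k) (x k)‖ ^ 2 :=
    summable_of_le_sub_add (fun k => mul_nonneg (hγ₂ k) (sq_nonneg _))
      (fun k => sq_nonneg ‖x k - p‖) (fun k => by positivity)
      ((hr.add (hβγ.mul_right ‖p‖)).mul_left (2 * M))
      fun k => mul_sq_norm_displacement_le hA hJ hc hrec hξ hp hM (hγ₁ k)
  have hvar : Summable fun k => |c (k + 1) - c k| / c k * M := by
    refine .of_nonneg_of_le (fun k => by have := hc k; positivity) (fun k => ?_)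
      ((hc_var.div_const ε).mul_right M)
    gcongr
    exact hεc k
  obtain ⟨l, hl⟩ := exists_tendsto_of_le_add_of_summable
    (d := fun k => ‖x k - J (c k) (x k)‖) (fun k => norm_nonneg _)
    (fun k => by have := hc k; positivity) ((hr.add (hβγ.mul_right (M + ‖p‖))).add hvar)
    (norm_displacement_succ_le hA hJ hc hrec hξ hp hM)
  have hl0 : l ^ 2 ≤ 0 := nonpos_of_tendsto_of_summable_mul hγ₂
    ((not_summable_iff_tendsto_nat_atTop_of_nonneg hγ₂).2 hγ_sum) hsum (hl.pow 2)
  rwa [pow_eq_zero_iff two_ne_zero |>.1 (le_antisymm hl0 (sq_nonneg l))] at hl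

end Iteration

end Hilbert

/-- Theorem 4.1 (WeakConverg): under the summability conditions and one of the four listed
parameter conditions, the generalized proximal point algorithm iterates `(x_k)` converge
weakly to a point of `zer A`. -/
theorem stmt17 {H : Type*} [NormedAddCommGroup H] [InnerProductSpace ℝ H] [CompleteSpace H]
    (A : H → Set H)
    (hmono : ∀ x y xu yv : H, xu ∈ A x → yv ∈ A y → 0 ≤ ⟪x - y, xu - yv⟫_ℝ)
    (hmax : ∀ x xu : H, (∀ y yv : H, yv ∈ A y → 0 ≤ ⟪x - y, xu - yv⟫_ℝ) → xu ∈ A x)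
    (J : ℝ → H → H)
    (hJ : ∀ c : ℝ, 0 < c → ∀ x : H, (1 / c) • (x - J c x) ∈ A (J c x))
    (u : H) (e : ℕ → H) (c α β γ δ : ℕ → ℝ) (hc : ∀ k, 0 < c k)
    (x : ℕ → H)
    (hrec : ∀ k, x (k + 1) = α k • u + β k • x k + γ k • J (c k) (x k) + δ k • e k)
    (ξ : ℕ → ℝ) (hξ : ∀ k, ξ k = |β k + γ k / 2| + |γ k / 2|)
    (hzer : ∃ p : H, (0 : H) ∈ A p)
    (hξ1 : ∀ k, ξ k ≤ 1)
    (hαsum : Summable (fun k => |α k|))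
    (hβγsum : Summable (fun k => |1 - β k - γ k|))
    (hdesum : Summable (fun k => ‖δ k • e k‖))
    (hcase :
      -- (1)
      (Tendsto γ atTop (nhds 1) ∧
        ((∃ ε > (0 : ℝ), ∀ k, ε ≤ c k) ∨ Tendsto c atTop atTop)) ∨
      -- (2)
      ((∃ r < (1 : ℝ), ∀ᶠ k in atTop, |β k| ≤ r) ∧
        (∃ a > (0 : ℝ), ∀ᶠ k in atTop, a ≤ 1 - β k - γ k / 2) ∧
        (∃ b < (1 : ℝ), ∀ᶠ k in atTop, 1 - β k - γ k / 2 ≤ b) ∧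
        Tendsto (fun k => 1 - c k / c (k + 1)) atTop (nhds 0) ∧
        ((∃ ε > (0 : ℝ), ∀ k, ε ≤ c k) ∨ Tendsto c atTop atTop)) ∨
      -- (3)
      ((∀ k, 0 ≤ γ k * (β k + γ k)) ∧
        (∃ r > (0 : ℝ), ∀ᶠ k in atTop, r ≤ γ k * (2 * β k + γ k)) ∧
        ((∃ ε > (0 : ℝ), ∀ k, ε ≤ c k) ∨ Tendsto c atTop atTop)) ∨
      -- (4)
      ((∀ k, 0 ≤ γ k * (β k + γ k)) ∧ (∀ k, 0 ≤ γ k * (2 * β k + γ k)) ∧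
        Tendsto (fun n => ∑ k ∈ Finset.range n, γ k * (2 * β k + γ k)) atTop atTop ∧
        (∀ k, |β k + γ k| * |γ k| ≤ max (1 - |β k|) (2 - 2 * |β k + γ k / 2|)) ∧
        (∃ ε > (0 : ℝ), ∀ k, ε ≤ c k) ∧
        Summable (fun k => |c (k + 1) - c k|))) :
    ∃ z : H, (0 : H) ∈ A z ∧
      ∀ w : H, Tendsto (fun k => ⟪x k, w⟫_ℝ) atTop (nhds ⟪z, w⟫_ℝ) := by
  obtain ⟨p, hp⟩ := hzer
  have hξ' : ∀ k, |β k + γ k / 2| + |γ k / 2| ≤ 1 := fun k => hξ k ▸ hξ1 k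
  have hrec' : ∀ k, x (k + 1) = β k • x k + γ k • J (c k) (x k) + (α k • u + δ k • e k) :=
    fun k => by rw [hrec k]; abel
  have hr : Summable fun k => ‖α k • u + δ k • e k‖ :=
    .of_nonneg_of_le (fun _ => norm_nonneg _)
      (fun k => (norm_add_le _ _).trans (by rw [norm_smul, Real.norm_eq_abs]))
      ((hαsum.mul_right ‖u‖).add hdesum)
  have hβγ : Tendsto (fun k => 1 - β k - γ k) atTop (𝓝 0) :=
    (tendsto_zero_iff_abs_tendsto_zero _).2 hβγsum.tendsto_atTop_zero
  have hreg : Tendsto (fun k => x k - J (c k) (x k)) atTop (𝓝 0) := by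
    rw [tendsto_zero_iff_norm_tendsto_zero]
    rcases hcase with ⟨hγ, -⟩ | ⟨hβ, -, hb, -⟩ | ⟨hγ₁, ⟨ρ, hρ, hγ₂⟩, -⟩ |
      ⟨hγ₁, hγ₂, hγ_sum, -, hcε, hc_var⟩
    · exact tendsto_norm_displacement_of_eventually hmono hJ hc hrec' hξ' hp hr hβγsum
        (eventually_relaxation_pos_of_tendsto_one hγ hβγ)
    · exact tendsto_norm_displacement_of_eventually hmono hJ hc hrec' hξ' hp hr hβγsum
        (eventually_relaxation_pos_of_abs_le hβ hb hβγ)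
    · exact tendsto_norm_displacement_of_eventually hmono hJ hc hrec' hξ' hp hr hβγsum
        ⟨ρ, hρ, hγ₂.mono fun k hk => ⟨hγ₁ k, hk⟩⟩
    · exact tendsto_norm_displacement_of_summable hmono hJ hc hrec' hξ' hp hr hβγsum
        hγ₁ hγ₂ hγ_sum hcε hc_var
  have hc_large : (∃ ε > 0, ∀ k, ε ≤ c k) ∨ Tendsto c atTop atTop := by
    rcases hcase with ⟨-, h⟩ | ⟨-, -, -, -, h⟩ | ⟨-, -, h⟩ | ⟨-, -, -, -, h, -⟩
    exacts [h, h, h, .inl h]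
  obtain ⟨M, hM⟩ := exists_norm_iterate_sub_le hmono hJ hc hrec' hξ' hp hr hβγsum
  refine exists_tendsto_inner_of_forall_mapClusterPt (S := {z | 0 ∈ A z}) ⟨p, hp⟩
    (fun z hz => exists_tendsto_norm_iterate_sub hmono hJ hc hrec' hξ' hz hr hβγsum)
    fun z hz => ?_
  refine IsMonotoneOperator.zero_mem_of_mapClusterPt hmono hmax (fun k => hJ (c k) (hc k) (x k))
    (tendsto_one_div_smul_of_tendsto_zero hreg hc_large) hreg ⟨M + ‖p‖, fun k => ?_⟩ hz
  linarith [IsResolvent.norm_apply_le_add hJ hmono (hc k) hp (x k), hM k]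
end
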